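/- arXiv:1307.6625 — 6 statements merged into one kernel-verified Lean document; each statement's English description precedes it below -/
import Mathlib

section
/- Let X be a metric space and n ∈ ℕ. Then asdim X ≤ n if and only if for every s < ∞ and t < ∞ there exists a uniformly bounded cover 𝒰 of X such that the s-multiplicity of 𝒰 is at most n+1 and the Lebesgue number of 𝒰 is at least t. -/
open Metric Set
open scoped Classical

/-- `𝒰` is an `r`-disjoint family of subsets: any two points lying in different
members are at distance `> r`. -/
def RDisjoint {X : Type*} [PseudoMetricSpace X] (r : ℝ) (𝒰 : Set (Set X)) : Prop :=
  ∀ U ∈ 𝒰, ∀ V ∈ 𝒰, U ≠ V → ∀ x ∈ U, ∀ y ∈ V, r < dist x y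

/-- The asymptotic dimension of `X` is at most `n`. -/
def AsdimLE (X : Type*) [PseudoMetricSpace X] (n : ℕ) : Prop :=
  ∀ r : ℝ, ∃ (D : ℝ) (𝒰 : Fin (n + 1) → Set (Set X)),
    (∀ i, RDisjoint r (𝒰 i)) ∧
    (∀ i, ∀ U ∈ 𝒰 i, EMetric.diam U ≤ ENNReal.ofReal D) ∧
    (⋃ i, ⋃₀ 𝒰 i) = Set.univ

/-- The asymptotic Assouad-Nagata dimension of `X` is at most `n`. -/
def ANasdimLE (X : Type*) [PseudoMetricSpace X] (n : ℕ) : Prop :=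
  ∃ c b : ℝ, 0 ≤ c ∧ 0 ≤ b ∧ ∀ r : ℝ, ∃ 𝒰 : Fin (n + 1) → Set (Set X),
    (∀ i, RDisjoint r (𝒰 i)) ∧
    (∀ i, ∀ U ∈ 𝒰 i, EMetric.diam U ≤ ENNReal.ofReal (c * r + b)) ∧
    (⋃ i, ⋃₀ 𝒰 i) = Set.univ

/-- The Assouad-Nagata dimension of `X` is at most `n`. -/
def ANdimLE (X : Type*) [PseudoMetricSpace X] (n : ℕ) : Prop :=
  ∃ c : ℝ, 0 ≤ c ∧ ∀ r : ℝ, ∃ 𝒰 : Fin (n + 1) → Set (Set X),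
    (∀ i, RDisjoint r (𝒰 i)) ∧
    (∀ i, ∀ U ∈ 𝒰 i, EMetric.diam U ≤ ENNReal.ofReal (c * r)) ∧
    (⋃ i, ⋃₀ 𝒰 i) = Set.univ

/-- `𝒰` covers `X`. -/
def IsCover {X : Type*} (𝒰 : Set (Set X)) : Prop := ⋃₀ 𝒰 = Set.univ

/-- `mesh 𝒰 ≤ M`: every member of `𝒰` has diameter at most `M`. -/
def MeshLE {X : Type*} [PseudoMetricSpace X] (𝒰 : Set (Set X)) (M : ℝ) : Prop :=
  ∀ U ∈ 𝒰, EMetric.diam U ≤ ENNReal.ofReal M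

/-- `𝒰` is uniformly bounded. -/
def UniformlyBounded {X : Type*} [PseudoMetricSpace X] (𝒰 : Set (Set X)) : Prop :=
  ∃ M : ℝ, MeshLE 𝒰 M

/-- The `s`-multiplicity of `𝒰` is at most `m`: no subset of diameter at most `s`
meets more than `m` members of `𝒰`. -/
def MultLE {X : Type*} [PseudoMetricSpace X] (𝒰 : Set (Set X)) (s : ℝ) (m : ℕ) : Prop :=
  ∀ B : Set X, EMetric.diam B ≤ ENNReal.ofReal s →
    {U | U ∈ 𝒰 ∧ (U ∩ B).Nonempty}.encard ≤ (m : ℕ∞)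

/-- The `r`-multiplicity of `𝒰`, as an extended natural number. -/
noncomputable def rMult {X : Type*} [PseudoMetricSpace X] (𝒰 : Set (Set X)) (r : ℝ) : ℕ∞ :=
  ⨆ B ∈ {B : Set X | EMetric.diam B ≤ ENNReal.ofReal r},
    {U | U ∈ 𝒰 ∧ (U ∩ B).Nonempty}.encard

/-- The (pointwise) multiplicity of `𝒰`, as an extended natural number. -/
noncomputable def Mult {X : Type*} (𝒰 : Set (Set X)) : ℕ∞ :=
  ⨆ x : X, {U | U ∈ 𝒰 ∧ x ∈ U}.encard

/-- The Lebesgue number of `𝒰` is at least `t`: every subset of diameter at most `t`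
is contained in some member of `𝒰`. -/
def LebesgueGE {X : Type*} [PseudoMetricSpace X] (𝒰 : Set (Set X)) (t : ℝ) : Prop :=
  ∀ B : Set X, EMetric.diam B ≤ ENNReal.ofReal t → ∃ U ∈ 𝒰, B ⊆ U

/-- `f` is bornologous. -/
def Bornologous {X Y : Type*} [PseudoMetricSpace X] [PseudoMetricSpace Y] (f : X → Y) : Prop :=
  ∃ δ : ℝ → ℝ, ∀ x x' : X, dist (f x) (f x') ≤ δ (dist x x')

/-- `f` is (metrically) proper: preimages of bounded sets are bounded. -/
def MetricProper {X Y : Type*} [PseudoMetricSpace X] [PseudoMetricSpace Y] (f : X → Y) : Prop :=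
  ∀ B : Set Y, Bornology.IsBounded B → Bornology.IsBounded (f ⁻¹' B)

/-- `f` is a coarse map. -/
def CoarseMap {X Y : Type*} [PseudoMetricSpace X] [PseudoMetricSpace Y] (f : X → Y) : Prop :=
  Bornologous f ∧ MetricProper f

/-- `f` is a Lipschitz map. -/
def LipschitzMap {X Y : Type*} [PseudoMetricSpace X] [PseudoMetricSpace Y] (f : X → Y) : Prop :=
  ∃ c : ℝ, 0 < c ∧ ∀ x x' : X, dist (f x) (f x') ≤ c * dist x x'

/-- `f` is asymptotically Lipschitz. -/
def AsympLipschitz {X Y : Type*} [PseudoMetricSpace X] [PseudoMetricSpace Y] (f : X → Y) : Prop :=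
  ∃ c b : ℝ, 0 < c ∧ 0 < b ∧ ∀ x x' : X, dist (f x) (f x') ≤ c * dist x x' + b

/-- Property (B)ₙ of a map `f : X → Y`. -/
def PropertyB {X Y : Type*} [PseudoMetricSpace X] [PseudoMetricSpace Y]
    (f : X → Y) (n : ℕ) : Prop :=
  ∀ r : ℝ, ∃ d : ℝ, ∀ B : Set Y, EMetric.diam B ≤ ENNReal.ofReal r →
    ∃ A : Fin n → Set X, f ⁻¹' B = ⋃ i, A i ∧ ∀ i, EMetric.diam (A i) ≤ ENNReal.ofReal d

/-- Property (C)ₙ of a map `f : X → Y`. -/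
def PropertyC {X Y : Type*} [PseudoMetricSpace X] [PseudoMetricSpace Y]
    (f : X → Y) (n : ℕ) : Prop :=
  ∃ c d : ℝ, 0 < c ∧ 0 < d ∧ ∀ r : ℝ, ∀ B : Set Y, EMetric.diam B ≤ ENNReal.ofReal r →
    ∃ A : Fin n → Set X, f ⁻¹' B = ⋃ i, A i ∧
      ∀ i, EMetric.diam (A i) ≤ ENNReal.ofReal (c * r + d)

/-- Property (B) (of Miyata-Yoshimura). -/
def PropertyB0 {X Y : Type*} [PseudoMetricSpace X] [PseudoMetricSpace Y] (f : X → Y) : Prop :=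
  ∃ d : ℝ, 0 < d ∧ ∀ r : ℝ, 0 < r → ∀ B : Set Y, EMetric.diam B ≤ ENNReal.ofReal r →
    ∃ A : Set X, EMetric.diam A ≤ ENNReal.ofReal (d * r) ∧ f '' A = B

/-- Two maps are close. -/
def CloseMaps {X Y : Type*} [PseudoMetricSpace Y] (f g : X → Y) : Prop :=
  ∃ S : ℝ, ∀ x : X, dist (f x) (g x) ≤ S

/-- `f` is a coarse equivalence. -/
def CoarseEquivalence {X Y : Type*} [PseudoMetricSpace X] [PseudoMetricSpace Y]
    (f : X → Y) : Prop :=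
  CoarseMap f ∧ ∃ g : Y → X, CoarseMap g ∧ CloseMaps (f ∘ g) id ∧ CloseMaps (g ∘ f) id

/-- `f` is a quasi-isometric map. -/
def QuasiIsometric {X Y : Type*} [PseudoMetricSpace X] [PseudoMetricSpace Y]
    (f : X → Y) : Prop :=
  (∃ c b : ℝ, 0 < c ∧ 0 < b ∧ ∀ x x' : X,
      (1 / c) * dist x x' - b ≤ dist (f x) (f x') ∧ dist (f x) (f x') ≤ c * dist x x' + b) ∧
  ∃ R : ℝ, 0 < R ∧ ∀ y : Y, ∃ x : X, dist y (f x) ≤ R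

/-- `d` satisfies the ultrametric (strong triangle) inequality. -/
def IsUltrametric {X : Type*} (d : X → X → ℝ) : Prop :=
  ∀ x y z : X, d x z ≤ max (d x y) (d y z)

/-- The distance function of a metric-space structure. -/
def distOf {Z : Type*} (m : MetricSpace Z) : Z → Z → ℝ :=
  m.toPseudoMetricSpace.toDist.dist

/-- The sum metric on the product of two metric spaces. -/
noncomputable def sumMetric (X Y : Type*) [MetricSpace X] [MetricSpace Y] :
    MetricSpace (X × Y) where
  dist p q := dist p.1 q.1 + dist p.2 q.2
  dist_self p := by simp
  dist_comm p q := by simp [dist_comm]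
  dist_triangle p q r := by
    have h1 := dist_triangle p.1 q.1 r.1
    have h2 := dist_triangle p.2 q.2 r.2
    try dsimp only
    linarith
  eq_of_dist_eq_zero := by
    intro p q h
    try dsimp only at h
    have h1 : dist p.1 q.1 = 0 :=
      le_antisymm (by linarith [dist_nonneg (x := p.2) (y := q.2)]) dist_nonneg
    have h2 : dist p.2 q.2 = 0 :=
      le_antisymm (by linarith [dist_nonneg (x := p.1) (y := q.1)]) dist_nonneg
    exact Prod.ext (dist_eq_zero.mp h1) (dist_eq_zero.mp h2)

/-- `p(V, W)`: the least `k` such that `V ∪ W` is contained in a member of `𝒰ₖ`. -/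
noncomputable def pVal {X : Type*} (𝒰 : ℕ → Set (Set X)) (V W : ↥(𝒰 0)) : ℕ :=
  sInf {k : ℕ | ∃ U ∈ 𝒰 k, (V : Set X) ∪ (W : Set X) ⊆ U}

/-- The ultrametric `d_B` (base `3`) on `𝒰₀` determined by a precode structure. -/
noncomputable def dB {X : Type*} (𝒰 : ℕ → Set (Set X)) (V W : ↥(𝒰 0)) : ℝ :=
  if V = W then 0 else 3 ^ pVal 𝒰 V W

/-- The ultrametric `d_C` (base `a`) on `𝒰₀` determined by a precode structure. -/
noncomputable def dC {X : Type*} (𝒰 : ℕ → Set (Set X)) (a : ℝ) (V W : ↥(𝒰 0)) : ℝ :=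
  if V = W then 0 else a ^ pVal 𝒰 V W

/-!
For `asdim X ≤ n ⇒ covers`: take `n + 1` families that are `(s + 2δ)`-disjoint with `δ > t`
and thicken every member by `δ`. A set of diameter `≤ s` meets the thickenings of at most one
member of each family, and a set of diameter `≤ t` lies in the thickening of any member it meets.

For the converse, fix `ρ ≥ 0` and a cover `𝒰` of multiplicity `≤ n + 1` with Lebesgue number
`≥ (4n + 6)ρ`. For each `x` the members of `𝒰` containing `closedBall x R` form a family that
shrinks as `R` grows, has at most `n + 1` elements and is nonempty up to `R = (2n + 3)ρ`, so it
is constant on some interval `[(2j + 1)ρ, (2j + 3)ρ]`; call its value there `σ x`. If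
`dist x y ≤ ρ`, the one of `σ x`, `σ y` chosen at the smaller `j` contains the other, so
points of the same level `(σ x).ncard = i + 1` at distance `≤ ρ` have the same `σ`. The fibres
of `σ` at level `i` form the `i`-th `ρ`-disjoint family; each fibre lies in a member of `𝒰`.
-/

theorem Set.exists_eq_succ_of_antitone {α : Type*} {E : ℕ → Set α} (hE : Antitone E)
    (hfin : (E 0).Finite) {m : ℕ} (hcard : (E 0).ncard ≤ m) (hne : (E m).Nonempty) :
    ∃ j < m, E j = E (j + 1) := by
  by_contra! hstrict
  have hdrop : ∀ j ≤ m, (E j).ncard + j ≤ (E 0).ncard := by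
    intro j
    induction j with
    | zero => simp
    | succ j ih =>
      intro hj
      have hlt : (E (j + 1)).ncard < (E j).ncard :=
        ncard_lt_ncard ((hE j.le_succ).ssubset_of_ne (hstrict j hj).symm)
          (hfin.subset (hE j.zero_le))
      linarith [ih (by omega)]
  have hpos := (ncard_pos (hfin.subset (hE m.zero_le))).mpr hne
  linarith [hdrop m le_rfl]

section Metric

variable {X : Type*} [PseudoMetricSpace X] {𝒰 : Set (Set X)}

lemma dist_le_of_ediam_le_ofReal {B : Set X} {s : ℝ} (hs : 0 ≤ s)
    (hB : Metric.ediam B ≤ ENNReal.ofReal s) {x y : X} (hx : x ∈ B) (hy : y ∈ B) :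
    dist x y ≤ s := by
  rw [← ENNReal.ofReal_le_ofReal_iff hs, ← edist_dist]
  exact (Metric.edist_le_ediam_of_mem hx hy).trans hB

lemma RDisjoint.mono {r r' : ℝ} (h : RDisjoint r' 𝒰) (hr : r ≤ r') : RDisjoint r 𝒰 :=
  fun U hU V hV hUV x hx y hy => hr.trans_lt (h U hU V hV hUV x hx y hy)

lemma MultLE.mono {s s' : ℝ} {m : ℕ} (h : MultLE 𝒰 s' m) (hs : s ≤ s') : MultLE 𝒰 s m :=
  fun B hB => h B (hB.trans (ENNReal.ofReal_le_ofReal hs))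

lemma LebesgueGE.mono {t t' : ℝ} (h : LebesgueGE 𝒰 t') (ht : t ≤ t') : LebesgueGE 𝒰 t :=
  fun B hB => h B (hB.trans (ENNReal.ofReal_le_ofReal ht))

lemma ediam_thickening_le_ofReal {U : Set X} {D : ℝ} (hD : 0 ≤ D)
    (hU : Metric.ediam U ≤ ENNReal.ofReal D) (δ : ℝ) :
    Metric.ediam (thickening δ U) ≤ ENNReal.ofReal (D + 2 * δ) := by
  refine Metric.ediam_le_of_forall_dist_le fun y hy y' hy' => ?_
  obtain ⟨u, hu, hyu⟩ := mem_thickening_iff.mp hy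
  obtain ⟨u', hu', hyu'⟩ := mem_thickening_iff.mp hy'
  have huu' := dist_le_of_ediam_le_ofReal hD hU hu hu'
  linarith [dist_triangle4 y u u' y', dist_comm y' u']

lemma subset_thickening_of_ediam_le {B U : Set X} {t δ : ℝ} (ht : 0 ≤ t) (htδ : t < δ)
    (hB : Metric.ediam B ≤ ENNReal.ofReal t) {x : X} (hxB : x ∈ B) (hxU : x ∈ U) :
    B ⊆ thickening δ U :=
  fun _ hy =>
    mem_thickening_iff.mpr ⟨x, hxU, (dist_le_of_ediam_le_ofReal ht hB hy hxB).trans_lt htδ⟩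

lemma RDisjoint.subsingleton_thickening_inter_nonempty {r s δ : ℝ}
    (h : RDisjoint r 𝒰) (hs : 0 ≤ s) (hr : s + 2 * δ ≤ r) {B : Set X}
    (hB : Metric.ediam B ≤ ENNReal.ofReal s) :
    {U | U ∈ 𝒰 ∧ (thickening δ U ∩ B).Nonempty}.Subsingleton := by
  rintro U ⟨hU, y, hyU, hyB⟩ V ⟨hV, y', hyV, hyB'⟩
  by_contra hUV
  obtain ⟨u, hu, hyu⟩ := mem_thickening_iff.mp hyU
  obtain ⟨v, hv, hyv⟩ := mem_thickening_iff.mp hyV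
  have hyy' := dist_le_of_ediam_le_ofReal hs hB hyB hyB'
  linarith [h U hU V hV hUV u hu v hv, dist_triangle4 u y y' v, dist_comm u y]

theorem AsdimLE.exists_cover {n : ℕ} (h : AsdimLE X n) {s t : ℝ} (hs : 0 ≤ s) (ht : 0 ≤ t) :
    ∃ 𝒱 : Set (Set X), IsCover 𝒱 ∧ UniformlyBounded 𝒱 ∧ MultLE 𝒱 s (n + 1) ∧
      LebesgueGE 𝒱 t := by
  obtain ⟨D, 𝒰, hdisj, hdiam, hcov⟩ := h (s + 2 * (t + 1))
  have hmem : ∀ x, ∃ i, ∃ U ∈ 𝒰 i, x ∈ U := fun x => by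
    have hx : x ∈ ⋃ i, ⋃₀ 𝒰 i := hcov ▸ mem_univ x
    simpa only [mem_iUnion, mem_sUnion, exists_prop] using hx
  -- `∅` is added only so that `LebesgueGE` holds for `B = ∅` when `X` is empty.
  refine ⟨insert ∅ (⋃ i, thickening (t + 1) '' 𝒰 i), ?_, ⟨max D 0 + 2 * (t + 1), ?_⟩, ?_, ?_⟩
  · refine eq_univ_of_forall fun x => ?_
    obtain ⟨i, U, hU, hx⟩ := hmem x
    exact ⟨_, Or.inr (mem_iUnion.mpr ⟨i, U, hU, rfl⟩), self_subset_thickening (by linarith) U hx⟩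
  · rintro V (rfl | hV)
    · exact Metric.ediam_empty.trans_le zero_le
    obtain ⟨i, U, hU, rfl⟩ := mem_iUnion.mp hV
    exact ediam_thickening_le_ofReal (le_max_right D 0)
      ((hdiam i U hU).trans (ENNReal.ofReal_le_ofReal (le_max_left D 0))) _
  · intro B hB
    have hsub : {V | V ∈ insert ∅ (⋃ i, thickening (t + 1) '' 𝒰 i) ∧ (V ∩ B).Nonempty} ⊆
        ⋃ i, thickening (t + 1) '' {U | U ∈ 𝒰 i ∧ (thickening (t + 1) U ∩ B).Nonempty} := by
      rintro V ⟨rfl | hV, hVB⟩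
      · simp at hVB
      obtain ⟨i, U, hU, rfl⟩ := mem_iUnion.mp hV
      exact mem_iUnion.mpr ⟨i, U, ⟨hU, hVB⟩, rfl⟩
    have hone : ∀ i, (thickening (t + 1) ''
        {U | U ∈ 𝒰 i ∧ (thickening (t + 1) U ∩ B).Nonempty}).encard ≤ 1 := fun i =>
      encard_le_one_iff_subsingleton.mpr
        (((hdisj i).subsingleton_thickening_inter_nonempty hs le_rfl hB).image _)
    calc _ ≤ _ := encard_mono hsub
      _ ≤ ∑ i : Fin (n + 1), (1 : ℕ∞) :=
          (encard_iUnion_le_of_fintype _).trans (Finset.sum_le_sum fun i _ => hone i)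
      _ = ((n + 1 : ℕ) : ℕ∞) := by simp
  · intro B hB
    rcases B.eq_empty_or_nonempty with rfl | ⟨x, hx⟩
    · exact ⟨∅, mem_insert _ _, empty_subset _⟩
    obtain ⟨i, U, hU, hxU⟩ := hmem x
    exact ⟨_, Or.inr (mem_iUnion.mpr ⟨i, U, hU, rfl⟩),
      subset_thickening_of_ediam_le ht (lt_add_one t) hB hx hxU⟩

def ballSupersets (𝒰 : Set (Set X)) (x : X) (R : ℝ) : Set (Set X) :=
  {U | U ∈ 𝒰 ∧ closedBall x R ⊆ U}

lemma ballSupersets_antitone (x : X) : Antitone (ballSupersets 𝒰 x) :=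
  fun _ _ hR _ ⟨hU, hsub⟩ => ⟨hU, (closedBall_subset_closedBall hR).trans hsub⟩

lemma ballSupersets_add_subset {x y : X} {ε : ℝ} (hxy : dist x y ≤ ε) (R : ℝ) :
    ballSupersets 𝒰 x (R + ε) ⊆ ballSupersets 𝒰 y R :=
  fun _ ⟨hU, hsub⟩ =>
    ⟨hU, (closedBall_subset_closedBall' (by rw [dist_comm]; linarith)).trans hsub⟩

lemma ballSupersets_subset {R : ℝ} (hR : 0 ≤ R) (x : X) :
    ballSupersets 𝒰 x R ⊆ {U | U ∈ 𝒰 ∧ x ∈ U} :=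
  fun _ ⟨hU, hsub⟩ => ⟨hU, hsub (mem_closedBall_self hR)⟩

lemma MultLE.encard_mem_le {m : ℕ} (h : MultLE 𝒰 0 m) (x : X) :
    {U | U ∈ 𝒰 ∧ x ∈ U}.encard ≤ m := by
  simpa [inter_nonempty] using h {x} (Metric.ediam_singleton.trans_le zero_le)

lemma LebesgueGE.ballSupersets_nonempty {R : ℝ} (h : LebesgueGE 𝒰 (2 * R)) (x : X) :
    (ballSupersets 𝒰 x R).Nonempty := by
  refine h _ (Metric.ediam_le_of_forall_dist_le fun y hy z hz => ?_)
  rw [mem_closedBall] at hy hz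
  linarith [dist_triangle_right y z x]

lemma exists_ballSupersets_eq {n : ℕ} {ρ : ℝ} (hρ : 0 ≤ ρ) (hmult : MultLE 𝒰 0 (n + 1))
    (hleb : LebesgueGE 𝒰 ((4 * n + 6) * ρ)) (x : X) :
    ∃ j ≤ n, ballSupersets 𝒰 x ((2 * j + 1) * ρ) = ballSupersets 𝒰 x ((2 * j + 3) * ρ) := by
  set E : ℕ → Set (Set X) := fun j => ballSupersets 𝒰 x ((2 * j + 1) * ρ)
  have hpoint := hmult.encard_mem_le x
  have hE0 : E 0 ⊆ {U | U ∈ 𝒰 ∧ x ∈ U} := ballSupersets_subset (by positivity) x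
  have hfin := finite_of_encard_le_coe hpoint
  obtain ⟨j, hj, heq⟩ := exists_eq_succ_of_antitone (E := E) (m := n + 1)
    ((ballSupersets_antitone x).comp_monotone fun i j hij => by gcongr)
    (hfin.subset hE0)
    ((ncard_le_ncard hE0 hfin).trans (encard_le_coe_iff_finite_ncard_le.mp hpoint).2)
    ((hleb.mono (by push_cast; linarith)).ballSupersets_nonempty x)
  exact ⟨j, by omega, heq.trans (congrArg (ballSupersets 𝒰 x) (by push_cast; ring))⟩

lemma exists_supersets_selection {n : ℕ} {ρ : ℝ} (hρ : 0 ≤ ρ) (hmult : MultLE 𝒰 0 (n + 1))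
    (hleb : LebesgueGE 𝒰 ((4 * n + 6) * ρ)) :
    ∃ σ : X → Set (Set X),
      (∀ x, 0 < (σ x).ncard ∧ (σ x).ncard ≤ n + 1 ∧ σ x ⊆ {U | U ∈ 𝒰 ∧ x ∈ U}) ∧
      ∀ x y, dist x y ≤ ρ → (σ x).ncard = (σ y).ncard → σ x = σ y := by
  choose k hkn hk using exists_ballSupersets_eq hρ hmult hleb
  set σ := fun x => ballSupersets 𝒰 x ((2 * k x + 1) * ρ)
  have hpoint : ∀ x, σ x ⊆ {U | U ∈ 𝒰 ∧ x ∈ U} := fun x =>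
    ballSupersets_subset (by positivity) x
  have hpfin : ∀ x, {U | U ∈ 𝒰 ∧ x ∈ U}.Finite := fun x =>
    finite_of_encard_le_coe (hmult.encard_mem_le x)
  have hfin : ∀ x, (σ x).Finite := fun x => (hpfin x).subset (hpoint x)
  have hsub : ∀ x y, dist y x ≤ ρ → k x ≤ k y → σ y ⊆ σ x := fun x y hxy hk' => by
    have hk'' : (k x : ℝ) ≤ k y := Nat.cast_le.mpr hk'
    -- stability at `y` raises the radius of `σ y` to `(2 k y + 3) ρ ≥ (2 k x + 2) ρ`
    calc σ y = ballSupersets 𝒰 y ((2 * k y + 3) * ρ) := hk y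
      _ ⊆ ballSupersets 𝒰 y ((2 * k x + 1) * ρ + ρ) := ballSupersets_antitone y (by nlinarith)
      _ ⊆ σ x := ballSupersets_add_subset hxy _
  refine ⟨σ, fun x => ⟨?_, ?_, hpoint x⟩, fun x y hxy hcard => ?_⟩
  · have hkn' : (k x : ℝ) ≤ n := Nat.cast_le.mpr (hkn x)
    exact (ncard_pos (hfin x)).mpr ((hleb.mono (by nlinarith)).ballSupersets_nonempty x)
  · exact (ncard_le_ncard (hpoint x) (hpfin x)).trans
      (encard_le_coe_iff_finite_ncard_le.mp (hmult.encard_mem_le x)).2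
  · rcases le_total (k x) (k y) with hk' | hk'
    · exact (eq_of_subset_of_ncard_le (hsub x y (dist_comm x y ▸ hxy) hk') hcard.le (hfin x)).symm
    · exact eq_of_subset_of_ncard_le (hsub y x hxy hk') hcard.ge (hfin y)

lemma rDisjoint_image_fibers {β : Type*} {r : ℝ} {f : X → β} {T : Set β}
    (h : ∀ x y, f x ∈ T → f y ∈ T → dist x y ≤ r → f x = f y) :
    RDisjoint r ((fun b => f ⁻¹' {b}) '' T) := by
  rintro _ ⟨b, hb, rfl⟩ _ ⟨b', hb', rfl⟩ hne x (rfl : f x = b) y (rfl : f y = b')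
  by_contra! hxy
  exact hne (by rw [h x y hb hb' hxy])

lemma exists_rDisjoint_families_of_selection {n : ℕ} {ρ M : ℝ} (hmesh : MeshLE 𝒰 M)
    {σ : X → Set (Set X)}
    (hσ : ∀ x, 0 < (σ x).ncard ∧ (σ x).ncard ≤ n + 1 ∧ σ x ⊆ {U | U ∈ 𝒰 ∧ x ∈ U})
    (hσeq : ∀ x y, dist x y ≤ ρ → (σ x).ncard = (σ y).ncard → σ x = σ y) :
    ∃ 𝒲 : Fin (n + 1) → Set (Set X), (∀ i, RDisjoint ρ (𝒲 i)) ∧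
      (∀ i, ∀ W ∈ 𝒲 i, Metric.ediam W ≤ ENNReal.ofReal M) ∧ (⋃ i, ⋃₀ 𝒲 i) = univ := by
  refine ⟨fun i => (fun τ => σ ⁻¹' {τ}) '' {τ | τ.ncard = i + 1}, fun i => ?_, ?_, ?_⟩
  · exact rDisjoint_image_fibers fun x y hx hy hxy =>
      hσeq x y hxy ((show (σ x).ncard = i + 1 from hx).trans hy.symm)
  · rintro i _ ⟨τ, -, rfl⟩
    rcases (σ ⁻¹' {τ}).eq_empty_or_nonempty with hempty | ⟨x, rfl : σ x = τ⟩
    · simp only [hempty, Metric.ediam_empty, zero_le]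
    obtain ⟨U, hU⟩ := nonempty_of_ncard_ne_zero (hσ x).1.ne'
    have hfiber : σ ⁻¹' {σ x} ⊆ U := fun y (hy : σ y = σ x) => ((hσ y).2.2 (hy ▸ hU)).2
    exact (Metric.ediam_mono hfiber).trans (hmesh U ((hσ x).2.2 hU).1)
  · refine eq_univ_of_forall fun x => ?_
    obtain ⟨hpos, hle, -⟩ := hσ x
    refine mem_iUnion.mpr ⟨⟨(σ x).ncard - 1, by omega⟩, σ ⁻¹' {σ x}, ⟨σ x, ?_, rfl⟩, rfl⟩
    change (σ x).ncard = (σ x).ncard - 1 + 1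
    omega

theorem asdimLE_of_forall_cover {n : ℕ}
    (h : ∀ t : ℝ, ∃ 𝒰 : Set (Set X), UniformlyBounded 𝒰 ∧ MultLE 𝒰 0 (n + 1) ∧
      LebesgueGE 𝒰 t) :
    AsdimLE X n := by
  intro r
  obtain ⟨𝒰, ⟨M, hmesh⟩, hmult, hleb⟩ := h ((4 * n + 6) * max r 0)
  obtain ⟨σ, hσ, hσeq⟩ := exists_supersets_selection (le_max_right r 0) hmult hleb
  obtain ⟨𝒲, hdisj, hdiam, hcov⟩ := exists_rDisjoint_families_of_selection hmesh hσ hσeq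
  exact ⟨M, 𝒲, fun i => (hdisj i).mono (le_max_left r 0), hdiam, hcov⟩

end Metric

/-- `asdim X ≤ n` iff for every `s, t < ∞` there is a uniformly bounded
cover `𝒰` of `X` with `s`-multiplicity at most `n + 1` and Lebesgue number at least `t`. -/
theorem statement0 {X : Type*} [MetricSpace X] (n : ℕ) :
    AsdimLE X n ↔
      ∀ s t : ℝ, ∃ 𝒰 : Set (Set X), IsCover 𝒰 ∧ UniformlyBounded 𝒰 ∧
        MultLE 𝒰 s (n + 1) ∧ LebesgueGE 𝒰 t := by
  refine ⟨fun h s t => ?_, fun h => asdimLE_of_forall_cover fun t => ?_⟩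
  · obtain ⟨𝒰, hcov, hbdd, hmult, hleb⟩ := h.exists_cover (le_max_right s 0) (le_max_right t 0)
    exact ⟨𝒰, hcov, hbdd, hmult.mono (le_max_left s 0), hleb.mono (le_max_left t 0)⟩
  · obtain ⟨𝒰, -, hbdd, hmult, hleb⟩ := h 0 t
    exact ⟨𝒰, hbdd, hmult, hleb⟩
end

section
/- Let X and Y be metric spaces and let f: X → Y be a surjective Lipschitz map such that |f⁻¹(y)| ≤ n for each y ∈ Y and f has property (B). Then ANdim Y ≤ (ANdim X + 1)·n − 1. -/
open Metric Set
open scoped Classical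

/-! At scale `r > 0`, take an `(m + 1)`-coloured `2δ`-disjoint cover `𝒰` of `X` with
`δ = 4 d p r`, where `p = (m + 1) n`. The sets `f (thickening δ U)` cover `Y` with mesh `O(r)`;
a point of `Y` lies in at most `p` of them (it has at most `n` preimages, and each lies in the
`δ`-thickening of at most one member of each colour), and by property (B) every ball of radius
`p r` lies in one of them. A cover of multiplicity `≤ p` with Lebesgue number `≥ p r` has a
`p`-coloured `r`-disjoint refinement: fix for each `y` a level `a < p` at which the set `T y` of
members containing the ball of radius `a r` about `y` does not shrink when passing to `a + 1`.
Then `T y' ⊆ T y` whenever `dist y y' ≤ r` and the level of `y` is at most that of `y'`, so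
`r`-close points with `#T` equal have `T` equal, and `#T y ∈ {1, …, p}` serves as the colour. -/

open scoped NNReal

theorem ANdimLE.of_forall_pos {Y : Type*} [MetricSpace Y] {n : ℕ} {c : ℝ} (hc : 0 ≤ c)
    (h : ∀ r > 0, ∃ 𝒰 : Fin (n + 1) → Set (Set Y), (∀ i, RDisjoint r (𝒰 i)) ∧
      (∀ i, ∀ U ∈ 𝒰 i, ediam U ≤ ENNReal.ofReal (c * r)) ∧ (⋃ i, ⋃₀ 𝒰 i) = univ) :
    ANdimLE Y n := by
  refine ⟨c, hc, fun r => ?_⟩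
  rcases lt_or_ge 0 r with hr | hr
  · exact h r hr
  refine ⟨fun _ => range singleton, ?_, ?_, ?_⟩
  · rintro i _ ⟨y, rfl⟩ _ ⟨y', rfl⟩ hne x rfl x' rfl
    exact hr.trans_lt (dist_pos.2 fun h => hne (h ▸ rfl))
  · rintro i _ ⟨y, rfl⟩
    exact ediam_singleton.trans_le zero_le
  · exact eq_univ_of_forall fun y => mem_iUnion.2 ⟨0, ⟨{y}, mem_range_self y, rfl⟩⟩

theorem exists_lt_succ_eq_of_antitone {J : Type*} {S : ℕ → Set J} (hS : Antitone S) {p : ℕ}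
    (hcard : (S 0).encard ≤ p) (hne : (S p).Nonempty) : ∃ a < p, S (a + 1) = S a := by
  by_contra! hstrict
  have hfin : ∀ a, (S a).Finite := fun a => (finite_of_encard_le_coe hcard).subset (hS a.zero_le)
  have hdrop : ∀ a ≤ p, (S a).ncard + a ≤ p := by
    intro a
    induction a with
    | zero => simpa using (encard_le_coe_iff_finite_ncard_le.1 hcard).2
    | succ a ih =>
      intro ha
      have hlt : (S (a + 1)).ncard < (S a).ncard :=
        ncard_lt_ncard ((hS a.le_succ).ssubset_of_ne (hstrict a ha)) (hfin a)
      have := ih (by omega)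
      omega
  have := (ncard_pos (hfin p)).2 hne
  have := hdrop p le_rfl
  omega

section Coloring

variable {Y J : Type*} [PseudoMetricSpace Y]

def ballIndices (V : J → Set Y) (ε : ℝ) (a : ℕ) (y : Y) : Set J :=
  {j | closedBall y (a * ε) ⊆ V j}

variable {V : J → Set Y} {ε : ℝ}

theorem ballIndices_subset (hε : 0 ≤ ε) (a : ℕ) (y : Y) :
    ballIndices V ε a y ⊆ {j | y ∈ V j} :=
  fun _ hj => hj (mem_closedBall_self (by positivity))

theorem ballIndices_antitone (hε : 0 ≤ ε) (y : Y) : Antitone fun a => ballIndices V ε a y :=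
  fun _ _ hab _ hj => (closedBall_subset_closedBall (by gcongr)).trans hj

theorem ballIndices_succ_subset {y y' : Y} (h : dist y y' ≤ ε) (a : ℕ) :
    ballIndices V ε (a + 1) y ⊆ ballIndices V ε a y' :=
  fun _ hj => (closedBall_subset_closedBall' (by rw [dist_comm]; push_cast; linarith)).trans hj

theorem exists_coloring_subordinate (p : ℕ) (hε : 0 ≤ ε) (hmult : ∀ y, {j | y ∈ V j}.encard ≤ p)
    (hleb : ∀ y, ∃ j, closedBall y (p * ε) ⊆ V j) :
    ∃ (κ : Y → Fin p) (T : Y → Set J), (∀ y, (T y).Nonempty) ∧ (∀ y, ∀ j ∈ T y, y ∈ V j) ∧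
      ∀ y y', dist y y' ≤ ε → κ y = κ y' → T y = T y' := by
  have hcard0 : ∀ y, (ballIndices V ε 0 y).encard ≤ p := fun y =>
    (encard_le_encard (ballIndices_subset hε 0 y)).trans (hmult y)
  choose lev hlev_lt hlev_eq using fun y =>
    exists_lt_succ_eq_of_antitone (ballIndices_antitone hε y) (hcard0 y) (hleb y)
  set T := fun y => ballIndices V ε (lev y) y
  have hT_fin : ∀ y, (T y).Finite := fun y =>
    (finite_of_encard_le_coe (hmult y)).subset (ballIndices_subset hε _ y)
  have hT_ne : ∀ y, (T y).Nonempty := fun y =>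
    (hleb y).imp fun j hj => ballIndices_antitone hε y (hlev_lt y).le hj
  have hT_pos : ∀ y, 0 < (T y).ncard := fun y => (ncard_pos (hT_fin y)).2 (hT_ne y)
  have hT_card : ∀ y, (T y).ncard ≤ p := fun y => (encard_le_coe_iff_finite_ncard_le.1 <|
    (encard_le_encard (ballIndices_subset hε _ y)).trans (hmult y)).2
  have hT_mono : ∀ y y', dist y y' ≤ ε → lev y ≤ lev y' → T y' ⊆ T y := fun y y' h hl =>
    calc T y' = ballIndices V ε (lev y' + 1) y' := (hlev_eq y').symm
      _ ⊆ ballIndices V ε (lev y + 1) y' := ballIndices_antitone hε y' (by omega)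
      _ ⊆ T y := ballIndices_succ_subset (dist_comm y y' ▸ h) _
  refine ⟨fun y => ⟨(T y).ncard - 1, by have := hT_card y; have := hT_pos y; omega⟩, T, hT_ne,
    fun y j hj => ballIndices_subset hε _ y hj, fun y y' h hκ => ?_⟩
  have hcard : (T y).ncard = (T y').ncard := by
    have hval : (T y).ncard - 1 = (T y').ncard - 1 := congrArg Fin.val hκ
    have := hT_pos y
    have := hT_pos y'
    omega
  rcases le_total (lev y) (lev y') with hl | hl
  · exact (eq_of_subset_of_ncard_le (hT_mono y y' h hl) hcard.le (hT_fin y)).symm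
  · exact eq_of_subset_of_ncard_le (hT_mono y' y (dist_comm y y' ▸ h) hl) hcard.ge (hT_fin y')

theorem exists_rDisjoint_cover_of_coloring {p : ℕ} (κ : Y → Fin p) (T : Y → Set J)
    (hne : ∀ y, (T y).Nonempty) (hmem : ∀ y, ∀ j ∈ T y, y ∈ V j)
    (hκ : ∀ y y', dist y y' ≤ ε → κ y = κ y' → T y = T y') :
    ∃ 𝒞 : Fin p → Set (Set Y), (∀ k, RDisjoint ε (𝒞 k)) ∧ (∀ k, ∀ W ∈ 𝒞 k, ∃ j, W ⊆ V j) ∧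
      (⋃ k, ⋃₀ 𝒞 k) = univ := by
  refine ⟨fun k => range fun y => {z | κ z = k ∧ T z = T y}, ?_, ?_, ?_⟩
  · rintro k _ ⟨y, rfl⟩ _ ⟨y', rfl⟩ hdiff z ⟨hz, hzy⟩ z' ⟨hz', hzy'⟩
    by_contra! h
    exact hdiff (by dsimp only; rw [← hzy, ← hzy', hκ z z' h (hz.trans hz'.symm)])
  · rintro k _ ⟨y, rfl⟩
    obtain ⟨j, hj⟩ := hne y
    exact ⟨j, fun z ⟨_, hz⟩ => hmem z j (hz ▸ hj)⟩
  · exact eq_univ_of_forall fun y => mem_iUnion.2 ⟨κ y, _, mem_range_self y, rfl, rfl⟩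

theorem exists_rDisjoint_cover_subordinate (p : ℕ) (hε : 0 ≤ ε)
    (hmult : ∀ y, {j | y ∈ V j}.encard ≤ p) (hleb : ∀ y, ∃ j, closedBall y (p * ε) ⊆ V j) :
    ∃ 𝒞 : Fin p → Set (Set Y), (∀ k, RDisjoint ε (𝒞 k)) ∧ (∀ k, ∀ W ∈ 𝒞 k, ∃ j, W ⊆ V j) ∧
      (⋃ k, ⋃₀ 𝒞 k) = univ :=
  let ⟨κ, T, hne, hmem, hκ⟩ := exists_coloring_subordinate p hε hmult hleb
  exists_rDisjoint_cover_of_coloring κ T hne hmem hκ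

end Coloring

section Thickening

variable {X Y : Type*} [PseudoMetricSpace X]

theorem LipschitzWith.ediam_image_thickening_le [PseudoEMetricSpace Y] {f : X → Y} {K : ℝ≥0}
    (hf : LipschitzWith K f) {s : Set X} {D δ : ℝ} (hs : ediam s ≤ ENNReal.ofReal D)
    (hD : 0 ≤ D) (hδ : 0 ≤ δ) :
    ediam (f '' thickening δ s) ≤ ENNReal.ofReal (K * (D + 2 * δ)) :=
  calc ediam (f '' thickening δ s) ≤ K * ediam (thickening δ s) := hf.ediam_image_le _
    _ ≤ K * (ENNReal.ofReal D + 2 * ENNReal.ofReal δ) := by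
      have := ediam_thickening_le (s := s) δ.toNNReal
      rw [Real.coe_toNNReal _ hδ] at this
      grw [this, hs]
      rfl
    _ = ENNReal.ofReal (K * (D + 2 * δ)) := by
      rw [ENNReal.ofReal_mul K.coe_nonneg, ENNReal.ofReal_add hD (by positivity),
        ENNReal.ofReal_mul zero_le_two, ENNReal.ofReal_coe_nnreal, ENNReal.ofReal_ofNat]

theorem encard_setOf_mem_image_thickening_le {ι : Type*} [Fintype ι] {f : X → Y} {n : ℕ}
    (hfib : ∀ y : Y, (f ⁻¹' {y}).encard ≤ n) {δ : ℝ} {𝒰 : ι → Set (Set X)}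
    (h𝒰 : ∀ i, RDisjoint (2 * δ) (𝒰 i)) (y : Y) :
    {j : Σ i, 𝒰 i | y ∈ f '' thickening δ (j.2 : Set X)}.encard ≤ (Fintype.card ι * n : ℕ) := by
  have hpre : ∀ j : {j : Σ i, 𝒰 i | y ∈ f '' thickening δ (j.2 : Set X)},
      ∃ x : f ⁻¹' {y}, (x : X) ∈ thickening δ (j.1.2 : Set X) :=
    fun ⟨_, x, hx, hfx⟩ => ⟨⟨x, hfx⟩, hx⟩
  choose g hg using hpre
  -- Members of one `2δ`-disjoint family have disjoint `δ`-thickenings.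
  have hinj : Function.Injective fun j => (j.1.1, g j) := by
    rintro ⟨⟨i, U, hU⟩, hj⟩ ⟨⟨i', U', hU'⟩, hj'⟩ h
    obtain ⟨rfl, hx⟩ := Prod.mk.inj h
    obtain ⟨u, hu, hxu⟩ := mem_thickening_iff.1 (hg ⟨⟨i, U, hU⟩, hj⟩)
    obtain ⟨u', hu', hxu'⟩ := mem_thickening_iff.1 (hx ▸ hg ⟨⟨i, U', hU'⟩, hj'⟩)
    obtain rfl : U = U' := by
      by_contra hne
      have := h𝒰 i U hU U' hU' hne u hu u' hu'
      linarith [dist_triangle_left u u' (g ⟨⟨i, U, hU⟩, hj⟩ : X)]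
    rfl
  calc _ ≤ ENat.card (ι × f ⁻¹' {y}) := ENat.card_le_card_of_injective hinj
    _ ≤ (Fintype.card ι * n : ℕ) := by
      rw [ENat.card_prod, ENat.card_eq_coe_fintype_card, Nat.cast_mul]
      exact mul_le_mul_right (hfib y) _

theorem exists_closedBall_subset_image_thickening [PseudoMetricSpace Y] {f : X → Y} {d : ℝ}
    (hd : 0 ≤ d) (hB : ∀ r : ℝ, 0 < r → ∀ B : Set Y, ediam B ≤ ENNReal.ofReal r →
      ∃ A : Set X, ediam A ≤ ENNReal.ofReal (d * r) ∧ f '' A = B)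
    {ι : Type*} {𝒰 : ι → Set (Set X)} (hcov : (⋃ i, ⋃₀ 𝒰 i) = univ) {ρ δ : ℝ} (hρ : 0 < ρ)
    (hδ : d * (2 * ρ) < δ) (y : Y) :
    ∃ j : Σ i, 𝒰 i, closedBall y ρ ⊆ f '' thickening δ (j.2 : Set X) := by
  have hball : ediam (closedBall y ρ) ≤ ENNReal.ofReal (2 * ρ) :=
    ediam_le_of_forall_dist_le fun z hz z' hz' => by
      linarith [dist_triangle_right z z' y, mem_closedBall.1 hz, mem_closedBall.1 hz']
  obtain ⟨A, hA, hfA⟩ := hB (2 * ρ) (by positivity) _ hball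
  obtain ⟨x₀, hx₀, rfl⟩ : y ∈ f '' A := hfA ▸ mem_closedBall_self hρ.le
  obtain ⟨i, U, hU, hx₀U⟩ : ∃ i, ∃ U ∈ 𝒰 i, x₀ ∈ U := by
    simpa using hcov.ge (mem_univ x₀)
  refine ⟨⟨i, U, hU⟩, hfA ▸ image_mono fun x hx => mem_thickening_iff.2 ⟨x₀, hx₀U, ?_⟩⟩
  have hxx₀ := edist_le_of_ediam_le hx hx₀ hA
  rw [edist_dist, ENNReal.ofReal_le_ofReal_iff (by positivity)] at hxx₀
  exact hxx₀.trans_lt hδ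

end Thickening

theorem statement3_general {X Y : Type*} [MetricSpace X] [MetricSpace Y] (f : X → Y) (n : ℕ)
    (hlip : LipschitzMap f)
    (hfib : ∀ y : Y, (f ⁻¹' {y}).encard ≤ (n : ℕ∞)) (hB : PropertyB0 f) :
    ∀ m : ℕ, ANdimLE X m → ANdimLE Y ((m + 1) * n - 1) := by
  rintro m ⟨c, hc, hX⟩
  obtain ⟨K, hK, hfK⟩ := hlip
  have hf : LipschitzWith K.toNNReal f :=
    LipschitzWith.of_dist_le_mul fun x x' => by rw [Real.coe_toNNReal _ hK.le]; exact hfK x x'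
  obtain ⟨d, hd, hB⟩ := hB
  -- Truncated subtraction: `p ≥ (m + 1) * n` also when `n = 0`.
  set p := (m + 1) * n - 1 + 1
  refine ANdimLE.of_forall_pos (c := 8 * K * (c + 1) * d * p) (by positivity) fun r hr => ?_
  set δ := 4 * d * (p * r) with hδ
  obtain ⟨𝒰, h𝒰, hdiam, hcov⟩ := hX (2 * δ)
  set V := fun j : Σ i, 𝒰 i => f '' thickening δ (j.2 : Set X)
  have hmult : ∀ y, {j | y ∈ V j}.encard ≤ p := fun y =>
    (encard_setOf_mem_image_thickening_le hfib h𝒰 y).trans <| by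
      rw [Fintype.card_fin]; exact Nat.cast_le.2 (by omega)
  have hleb : ∀ y, ∃ j, closedBall y (p * r) ⊆ V j := by
    have : 0 < d * (p * r) := by positivity
    exact exists_closedBall_subset_image_thickening hd.le hB hcov (by positivity) (by linarith)
  obtain ⟨𝒞, h𝒞, hsub, h𝒞cov⟩ := exists_rDisjoint_cover_subordinate p hr.le hmult hleb
  refine ⟨𝒞, h𝒞, fun k W hW => ?_, h𝒞cov⟩
  obtain ⟨⟨i, U, hU⟩, hWU⟩ := hsub k W hW
  calc ediam W ≤ ediam (f '' thickening δ U) := ediam_mono hWU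
    _ ≤ ENNReal.ofReal (K * (c * (2 * δ) + 2 * δ)) := by
      simpa [Real.coe_toNNReal _ hK.le] using
        hf.ediam_image_thickening_le (hdiam i U hU) (by positivity) (by positivity)
    _ = ENNReal.ofReal (8 * K * (c + 1) * d * p * r) := by rw [hδ]; ring_nf

/-- dimension-raising for the Assouad-Nagata dimension: if `f : X → Y`
is a surjective Lipschitz map with fibers of cardinality at most `n` satisfying
property (B), then `ANdim Y ≤ (ANdim X + 1) · n − 1`. -/
theorem statement3 {X Y : Type*} [MetricSpace X] [MetricSpace Y] (f : X → Y) (n : ℕ)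
    (hsurj : Function.Surjective f) (hlip : LipschitzMap f)
    (hfib : ∀ y : Y, (f ⁻¹' {y}).encard ≤ (n : ℕ∞)) (hB : PropertyB0 f) :
    ∀ m : ℕ, ANdimLE X m → ANdimLE Y ((m + 1) * n - 1) :=
  statement3_general f n hlip hfib hB
end

section
/- Let f: X → Y be a map between metric spaces satisfying property (B)_n, let 𝒰 be a cover of X, let r < ∞, and let d < ∞ be the constant associated to r by property (B)_n (i.e., every subset B of Y with diam(B) ≤ r has f⁻¹(B) equal to a union of n sets of diameter ≤ d). Then the r-multiplicity of the cover f(𝒰) = {f(U) : U ∈ 𝒰} of Y is at most the d-multiplicity of 𝒰 times n. -/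
open Metric Set
open scoped Classical

def membersMeeting {X : Type*} (𝒰 : Set (Set X)) (B : Set X) : Set (Set X) :=
  {U | U ∈ 𝒰 ∧ (U ∩ B).Nonempty}

lemma encard_membersMeeting_le_rMult {X : Type*} [PseudoMetricSpace X] {𝒰 : Set (Set X)}
    {A : Set X} {s : ℝ} (hA : ediam A ≤ ENNReal.ofReal s) :
    (membersMeeting 𝒰 A).encard ≤ rMult 𝒰 s :=
  le_iSup₂ (f := fun (B : Set X) (_ : ediam B ≤ ENNReal.ofReal s) => (membersMeeting 𝒰 B).encard)
    A hA

lemma membersMeeting_image_subset {X Y ι : Type*} {f : X → Y} {𝒰 : Set (Set X)} {B : Set Y}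
    {A : ι → Set X} (hA : f ⁻¹' B ⊆ ⋃ i, A i) :
    membersMeeting (image f '' 𝒰) B ⊆ image f '' ⋃ i, membersMeeting 𝒰 (A i) := by
  rintro _ ⟨⟨U, hU, rfl⟩, _, ⟨x, hxU, rfl⟩, hxB⟩
  obtain ⟨i, hxi⟩ := mem_iUnion.mp (hA hxB)
  exact ⟨U, mem_iUnion.mpr ⟨i, hU, x, hxU, hxi⟩, rfl⟩

lemma encard_membersMeeting_image_le_sum {X Y ι : Type*} [Fintype ι] {f : X → Y}
    {𝒰 : Set (Set X)} {B : Set Y} {A : ι → Set X} (hA : f ⁻¹' B ⊆ ⋃ i, A i) :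
    (membersMeeting (image f '' 𝒰) B).encard ≤ ∑ i, (membersMeeting 𝒰 (A i)).encard :=
  calc (membersMeeting (image f '' 𝒰) B).encard
      ≤ (image f '' ⋃ i, membersMeeting 𝒰 (A i)).encard :=
        encard_le_encard (membersMeeting_image_subset hA)
    _ ≤ (⋃ i, membersMeeting 𝒰 (A i)).encard := encard_image_le _ _
    _ ≤ ∑ i, (membersMeeting 𝒰 (A i)).encard := encard_iUnion_le_of_fintype _

theorem statement7_general {X Y : Type*} [MetricSpace X] [MetricSpace Y] (f : X → Y) (n : ℕ)
    (𝒰 : Set (Set X)) (r d : ℝ)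
    (hrd : ∀ B : Set Y, EMetric.diam B ≤ ENNReal.ofReal r →
      ∃ A : Fin n → Set X, f ⁻¹' B = ⋃ i, A i ∧
        ∀ i, EMetric.diam (A i) ≤ ENNReal.ofReal d) :
    rMult ((Set.image f) '' 𝒰) r ≤ rMult 𝒰 d * (n : ℕ∞) := by
  refine iSup₂_le fun B hBr => ?_
  obtain ⟨A, hA, hAd⟩ := hrd B hBr
  calc (membersMeeting (image f '' 𝒰) B).encard
      ≤ ∑ i, (membersMeeting 𝒰 (A i)).encard :=
        encard_membersMeeting_image_le_sum hA.subset
    _ ≤ ∑ _i : Fin n, rMult 𝒰 d :=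
        Finset.sum_le_sum fun i _ => encard_membersMeeting_le_rMult (hAd i)
    _ = rMult 𝒰 d * n := by simp [mul_comm]

/-- if `f` satisfies property (B)ₙ, `𝒰` is a cover of `X`, and `d` is the
constant associated to `r` by property (B)ₙ, then the `r`-multiplicity of `f(𝒰)` is at
most the `d`-multiplicity of `𝒰` times `n`. -/
theorem statement7 {X Y : Type*} [MetricSpace X] [MetricSpace Y] (f : X → Y) (n : ℕ)
    (𝒰 : Set (Set X)) (hcov : IsCover 𝒰) (r d : ℝ) (hB : PropertyB f n)
    (hrd : ∀ B : Set Y, EMetric.diam B ≤ ENNReal.ofReal r →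
      ∃ A : Fin n → Set X, f ⁻¹' B = ⋃ i, A i ∧
        ∀ i, EMetric.diam (A i) ≤ ENNReal.ofReal d) :
    rMult ((Set.image f) '' 𝒰) r ≤ rMult 𝒰 d * (n : ℕ∞) :=
  statement7_general f n 𝒰 r d hrd
end

section
/- Suppose a metric space X admits a 1-precode structure for asymptotic dimension, i.e., a sequence 𝒰₀, 𝒰₁, … of uniformly bounded covers of X such that (a) for every i and every U ∈ 𝒰ᵢ there exists exactly one V ∈ 𝒰ᵢ₊₁ with U ⊆ V, (b) every bounded subset of X is contained in some member of some 𝒰ᵢ, and (c) for every r < ∞ there exists i with r-multiplicity of 𝒰ᵢ at most 1. Then there exist an ultrametric space Z and a coarse equivalence f: Z → X. -/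
open Metric Set
open scoped Classical

/-!
A cover of `r`-multiplicity at most one is a partition of `X` any two points of which at
distance `≤ r` lie in the same piece. Choosing scales `sₖ ≥ k` such that `s_{k+1}` bounds the
mesh of the partition chosen for the scale `sₖ`, each of these partitions refines the next, so
"lying in a common piece of the `k`-th partition" is an increasing exhaustive sequence of
equivalence relations. The least `k` at which two points become related is an ultrametric on
`X`, and the identity is a coarse equivalence: the pieces of each partition are uniformly
bounded, and points at distance `≤ sₖ` share a piece of the `k`-th partition.
-/

section

variable {X Y : Type*} [PseudoMetricSpace X] [PseudoMetricSpace Y]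

def UniformlyBornologous (f : X → Y) : Prop :=
  ∀ C : ℝ, ∃ D : ℝ, ∀ x x', dist x x' ≤ C → dist (f x) (f x') ≤ D

namespace UniformlyBornologous

variable {f : X → Y}

lemma bornologous (hf : UniformlyBornologous f) : Bornologous f := by
  choose D hD using hf
  exact ⟨D, fun x x' => hD _ x x' le_rfl⟩

lemma isBounded_image (hf : UniformlyBornologous f) {s : Set X} (hs : Bornology.IsBounded s) :
    Bornology.IsBounded (f '' s) := by
  obtain ⟨C, hC⟩ := isBounded_iff.mp hs
  obtain ⟨D, hD⟩ := hf C
  refine isBounded_iff.mpr ⟨D, ?_⟩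
  rintro _ ⟨x, hx, rfl⟩ _ ⟨y, hy, rfl⟩
  exact hD x y (hC hx hy)

lemma coarseMap {f : X → Y} {g : Y → X} (hf : UniformlyBornologous f)
    (hg : UniformlyBornologous g) (hgf : Function.LeftInverse g f) : CoarseMap f :=
  ⟨hf.bornologous, fun _ hB => (hg.isBounded_image hB).subset fun x hx => ⟨f x, hx, hgf x⟩⟩

end UniformlyBornologous

lemma Equiv.coarseEquivalence_of_uniformlyBornologous (e : X ≃ Y)
    (he : UniformlyBornologous e) (he' : UniformlyBornologous e.symm) : CoarseEquivalence e :=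
  ⟨he.coarseMap he' e.left_inv, e.symm, he'.coarseMap he e.right_inv,
    ⟨0, fun y => by simp⟩, ⟨0, fun x => by simp⟩⟩

end

structure EqvFiltration (X : Type*) where
  rel : ℕ → Setoid X
  mono : Monotone rel
  rel_zero : rel 0 = ⊥
  exhaustive : ∀ x y, ∃ k, rel k x y

namespace EqvFiltration

variable {X : Type*} (F : EqvFiltration X)

noncomputable def level (x y : X) : ℕ := Nat.find (F.exhaustive x y)

lemma level_le_iff {x y : X} {k : ℕ} : F.level x y ≤ k ↔ F.rel k x y :=
  ⟨fun h => Setoid.le_def.mp (F.mono h) (Nat.find_spec (F.exhaustive x y)),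
    fun h => Nat.find_min' _ h⟩

lemma level_comm (x y : X) : F.level x y = F.level y x :=
  le_antisymm (F.level_le_iff.mpr ((F.rel _).symm' (F.level_le_iff.mp le_rfl)))
    (F.level_le_iff.mpr ((F.rel _).symm' (F.level_le_iff.mp le_rfl)))

lemma level_le_max (x y z : X) : F.level x z ≤ max (F.level x y) (F.level y z) :=
  F.level_le_iff.mpr <| (F.rel _).trans' (F.level_le_iff.mp (le_max_left _ _))
    (F.level_le_iff.mp (le_max_right _ _))

lemma level_eq_zero {x y : X} : F.level x y = 0 ↔ x = y := by
  rw [← Nat.le_zero, level_le_iff, F.rel_zero, Setoid.bot_def]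

def Space (_ : EqvFiltration X) : Type _ := X

noncomputable instance : MetricSpace F.Space where
  dist x y := F.level x y
  dist_self (x : X) := by simp [F.level_eq_zero]
  dist_comm (x y : X) := by rw [F.level_comm]
  dist_triangle (x y z : X) := by
    have := F.level_le_max x y z
    exact_mod_cast this.trans (max_le_add_of_nonneg (Nat.zero_le _) (Nat.zero_le _))
  eq_of_dist_eq_zero {x y : X} h := F.level_eq_zero.mp (by exact_mod_cast h)

lemma dist_eq (x y : F.Space) : dist x y = F.level x y := rfl

lemma isUltrametric : IsUltrametric (dist : F.Space → F.Space → ℝ) := by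
  intro x y z
  simp only [dist_eq]
  exact_mod_cast F.level_le_max x y z

def equiv : F.Space ≃ X := Equiv.refl X

lemma coarseEquivalence_equiv [PseudoMetricSpace X]
    (hbdd : ∀ k, ∃ M, ∀ x y, F.rel k x y → dist x y ≤ M)
    (hlarge : ∀ C, ∃ k, ∀ x y, dist x y ≤ C → F.rel k x y) : CoarseEquivalence F.equiv := by
  refine F.equiv.coarseEquivalence_of_uniformlyBornologous (fun C => ?_) (fun C => ?_)
  · obtain ⟨M, hM⟩ := hbdd ⌊C⌋₊
    refine ⟨M, fun x y hxy => hM x y (F.level_le_iff.mp (Nat.le_floor ?_))⟩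
    rwa [← dist_eq]
  · obtain ⟨k, hk⟩ := hlarge C
    refine ⟨k, fun x y hxy => ?_⟩
    rw [dist_eq]
    exact_mod_cast F.level_le_iff.mpr (hk x y hxy)

end EqvFiltration

section

variable {X : Type*} [PseudoMetricSpace X] {𝒱 : Set (Set X)}

lemma MeshLE.mono {M M' : ℝ} (h : MeshLE 𝒱 M) (hM : M ≤ M') : MeshLE 𝒱 M' :=
  fun U hU => (h U hU).trans (ENNReal.ofReal_le_ofReal hM)

lemma MeshLE.dist_le {M : ℝ} (h : MeshLE 𝒱 M) (hM : 0 ≤ M) {U : Set X} (hU : U ∈ 𝒱)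
    {x y : X} (hx : x ∈ U) (hy : y ∈ U) : dist x y ≤ M := by
  have := (edist_le_ediam_of_mem hx hy).trans (h U hU)
  rwa [edist_dist, ENNReal.ofReal_le_ofReal_iff hM] at this

namespace MultLE

variable {s : ℝ}

lemma eq_of_inter_nonempty (h : MultLE 𝒱 s 1) {B : Set X} (hB : ediam B ≤ ENNReal.ofReal s)
    {U W : Set X} (hU : U ∈ 𝒱) (hW : W ∈ 𝒱) (hUB : (U ∩ B).Nonempty) (hWB : (W ∩ B).Nonempty) :
    U = W := by
  by_contra hUW
  have hpair : {U, W} ⊆ {V | V ∈ 𝒱 ∧ (V ∩ B).Nonempty} := by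
    rintro V (rfl | rfl)
    exacts [⟨hU, hUB⟩, ⟨hW, hWB⟩]
  have := (Set.encard_pair hUW).symm.trans_le ((Set.encard_mono hpair).trans (h B hB))
  norm_num at this

lemma existsUnique_mem (h : MultLE 𝒱 s 1) (hcov : IsCover 𝒱) (x : X) : ∃! U, U ∈ 𝒱 ∧ x ∈ U := by
  obtain ⟨U, hU, hxU⟩ := mem_sUnion.mp (hcov ▸ mem_univ x : x ∈ ⋃₀ 𝒱)
  exact ⟨U, ⟨hU, hxU⟩, fun W ⟨hW, hxW⟩ =>
    h.eq_of_inter_nonempty (B := {x}) (by simp) hW hU ⟨x, hxW, rfl⟩ ⟨x, hxU, rfl⟩⟩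

def setoid (h : MultLE 𝒱 s 1) (hcov : IsCover 𝒱) : Setoid X :=
  Setoid.mkClasses 𝒱 (h.existsUnique_mem hcov)

variable (h : MultLE 𝒱 s 1) (hcov : IsCover 𝒱)

lemma exists_mem_of_setoid {x y : X} (hxy : h.setoid hcov x y) : ∃ U ∈ 𝒱, x ∈ U ∧ y ∈ U := by
  obtain ⟨U, ⟨hU, hxU⟩, -⟩ := h.existsUnique_mem hcov x
  exact ⟨U, hU, hxU, hxy U hU hxU⟩

lemma setoid_of_mem {B : Set X} (hB : ediam B ≤ ENNReal.ofReal s) {x y : X} (hx : x ∈ B)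
    (hy : y ∈ B) : h.setoid hcov x y := by
  intro U hU hxU
  obtain ⟨W, ⟨hW, hyW⟩, -⟩ := h.existsUnique_mem hcov y
  rwa [h.eq_of_inter_nonempty hB hU hW ⟨x, hxU, hx⟩ ⟨y, hyW, hy⟩]

lemma setoid_of_dist_le {x y : X} (hxy : dist x y ≤ s) : h.setoid hcov x y :=
  h.setoid_of_mem hcov (B := {x, y})
    (by rw [ediam_pair, edist_dist]; exact ENNReal.ofReal_le_ofReal hxy) (by simp) (by simp)

end MultLE

end

namespace EqvFiltration

variable {X : Type*} [PseudoMetricSpace X] {𝒞 : ℕ → Set (Set X)} {s : ℕ → ℝ}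
  (hcov : ∀ k, IsCover (𝒞 k)) (hmult : ∀ k, MultLE (𝒞 k) (s k) 1)
  (hmesh : ∀ k, MeshLE (𝒞 k) (s (k + 1))) (hs : ∀ k : ℕ, (k : ℝ) ≤ s k)

/-- Level `k + 1` is the partition `𝒞 k`, which refines `𝒞 (k + 1)` by `hmesh`. -/
def ofCovers : EqvFiltration X where
  rel
    | 0 => ⊥
    | k + 1 => (hmult k).setoid (hcov k)
  mono := monotone_nat_of_le_succ fun
    | 0 => bot_le
    | k + 1 => Setoid.le_def.mpr fun hxy => by
      obtain ⟨U, hU, hxU, hyU⟩ := (hmult k).exists_mem_of_setoid (hcov k) hxy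
      exact (hmult (k + 1)).setoid_of_mem (hcov (k + 1)) (hmesh k U hU) hxU hyU
  rel_zero := rfl
  exhaustive x y :=
    ⟨⌈dist x y⌉₊ + 1, (hmult _).setoid_of_dist_le (hcov _) ((Nat.le_ceil _).trans (hs _))⟩

lemma ofCovers_rel_bounded :
    ∀ k, ∃ M, ∀ x y, (ofCovers hcov hmult hmesh hs).rel k x y → dist x y ≤ M
  | 0 => ⟨0, fun x y hxy => by rw [show x = y from hxy, dist_self]⟩
  | k + 1 => ⟨s (k + 1), fun x y hxy => by
      obtain ⟨U, hU, hxU, hyU⟩ := (hmult k).exists_mem_of_setoid (hcov k) hxy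
      exact (hmesh k).dist_le ((Nat.cast_nonneg _).trans (hs _)) hU hxU hyU⟩

lemma ofCovers_rel_of_dist_le (C : ℝ) :
    ∃ k, ∀ x y, dist x y ≤ C → (ofCovers hcov hmult hmesh hs).rel k x y :=
  ⟨⌈C⌉₊ + 1, fun _ _ hxy =>
    (hmult _).setoid_of_dist_le (hcov _) (hxy.trans ((Nat.le_ceil C).trans (hs _)))⟩

end EqvFiltration

lemma exists_seq_natCast_le_and_map_le_succ (g : ℝ → ℝ) :
    ∃ s : ℕ → ℝ, ∀ k : ℕ, (k : ℝ) ≤ s k ∧ g (s k) ≤ s (k + 1) := by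
  let s : ℕ → ℝ := fun k => Nat.rec 0 (fun k r => max ((k : ℝ) + 1) (g r)) k
  refine ⟨s, fun k => ⟨?_, le_max_right _ _⟩⟩
  cases k with
  | zero => simp [s]
  | succ k =>
    show ((k + 1 : ℕ) : ℝ) ≤ max ((k : ℝ) + 1) _
    exact_mod_cast le_max_left _ _

theorem statement12_general {X : Type u} [MetricSpace X] (𝒰 : ℕ → Set (Set X))
    (hcov : ∀ i, IsCover (𝒰 i)) (hub : ∀ i, UniformlyBounded (𝒰 i))
    (hc : ∀ r : ℝ, ∃ i, MultLE (𝒰 i) r 1) :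
    ∃ (Z : Type u) (mZ : MetricSpace Z),
      IsUltrametric (distOf mZ) ∧
      ∃ f : Z → X, @CoarseEquivalence Z X mZ.toPseudoMetricSpace _ f := by
  choose lev hlev using hc
  choose mesh hmesh using hub
  obtain ⟨s, hs⟩ := exists_seq_natCast_le_and_map_le_succ fun r => mesh (lev r)
  have hcov' (k : ℕ) := hcov (lev (s k))
  have hmult (k : ℕ) := hlev (s k)
  have hmesh' (k : ℕ) := (hmesh (lev (s k))).mono (hs k).2
  have hs' (k : ℕ) := (hs k).1
  let F := EqvFiltration.ofCovers hcov' hmult hmesh' hs'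
  exact ⟨F.Space, inferInstance, F.isUltrametric, F.equiv, F.coarseEquivalence_equiv
    (EqvFiltration.ofCovers_rel_bounded hcov' hmult hmesh' hs')
    (EqvFiltration.ofCovers_rel_of_dist_le hcov' hmult hmesh' hs')⟩

/-- if `X` admits a `1`-precode structure for asymptotic dimension, then
there exist an ultrametric space `Z` and a coarse equivalence `f : Z → X`. -/
theorem statement12 {X : Type u} [MetricSpace X] (𝒰 : ℕ → Set (Set X))
    (hcov : ∀ i, IsCover (𝒰 i)) (hub : ∀ i, UniformlyBounded (𝒰 i))
    (ha : ∀ i, ∀ U ∈ 𝒰 i, ∃! V, V ∈ 𝒰 (i + 1) ∧ U ⊆ V)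
    (hb : ∀ D : Set X, Bornology.IsBounded D → ∃ i, ∃ U ∈ 𝒰 i, D ⊆ U)
    (hc : ∀ r : ℝ, ∃ i, MultLE (𝒰 i) r 1) :
    ∃ (Z : Type u) (mZ : MetricSpace Z),
      IsUltrametric (distOf mZ) ∧
      ∃ f : Z → X, @CoarseEquivalence Z X mZ.toPseudoMetricSpace _ f :=
  statement12_general 𝒰 hcov hub hc
end

section
/- Let X be a metric space with ANasdim X ≤ n. Then X admits an (n+1)-precode structure for asymptotic Assouad-Nagata dimension: there exists a sequence 𝒰₀, 𝒰₁, … of uniformly bounded covers of X such that (a) for every i and every U ∈ 𝒰ᵢ there exists exactly one V ∈ 𝒰ᵢ₊₁ with U ⊆ V, (b) every bounded subset of X is contained in some member of some 𝒰ᵢ, (c) there exist a > 1 and i₀ ∈ ℕ with mesh(𝒰ᵢ) ≤ aⁱ for all i ≥ i₀, and (d) there exist c, r₀ > 0 such that for every r ≥ r₀ there exists i ∈ ℕ with aⁱ ≤ c·r and r-multiplicity of 𝒰ᵢ at most n+1. -/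
open Metric Set
open scoped Classical

/-! Each scale `tⁱ` gives, through a coloured cover, a partition of mesh `≲ tⁱ` and
`tⁱ`-multiplicity `≤ n + 1`. These partitions are made nested by induction: the pieces of the
partition at scale `tⁱ` are merged according to the partition at scale `tⁱ⁺¹`, every piece meeting
the ball `B(x₀, tⁱ)` around a base point being sent to the class of `x₀`. Merging at most doubles the mesh and adds
`O(tⁱ)`, so both the mesh and the multiplicity estimates survive up to a constant factor, and the
balls around `x₀` make every bounded set lie in a single piece. Partitions are handled as the
fibres of labelling maps, so that nesting is just factorisation of the labels. -/

section Fibers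

variable {X Y Z : Type*}

def fibers (f : X → Y) : Set (Set X) := range fun x => f ⁻¹' {f x}

lemma isCover_fibers (f : X → Y) : IsCover (fibers f) :=
  sUnion_eq_univ_iff.2 fun x => ⟨_, mem_range_self x, rfl⟩

lemma existsUnique_fibers_superset {f : X → Y} {g : X → Z}
    (hfg : ∀ x y, f x = f y → g x = g y) {U : Set X} (hU : U ∈ fibers f) :
    ∃! V, V ∈ fibers g ∧ U ⊆ V := by
  obtain ⟨x, rfl⟩ := hU
  refine ⟨g ⁻¹' {g x}, ⟨mem_range_self x, fun y hy => hfg y x hy⟩, ?_⟩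
  rintro _ ⟨⟨y, rfl⟩, hxy⟩
  have hgxy : g x = g y := hxy (mem_preimage.2 rfl)
  simp only [hgxy]

variable [PseudoMetricSpace X]

lemma dist_le_of_ediam_le {S : Set X} {d : ℝ} (hd : 0 ≤ d)
    (h : ediam S ≤ ENNReal.ofReal d) {x y : X} (hx : x ∈ S) (hy : y ∈ S) :
    dist x y ≤ d :=
  (edist_le_ofReal hd).1 ((edist_le_ediam_of_mem hx hy).trans h)

lemma meshLE_fibers {f : X → Y} {M : ℝ} (h : ∀ x y, f x = f y → dist x y ≤ M) :
    MeshLE (fibers f) M := by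
  rintro _ ⟨x, rfl⟩
  exact ediam_le_of_forall_dist_le fun y hy z hz => h y z (hy.trans hz.symm)

lemma multLE_fibers {f : X → Y} {r : ℝ} {m : ℕ}
    (h : ∀ B : Set X, ediam B ≤ ENNReal.ofReal r → (f '' B).encard ≤ m) :
    MultLE (fibers f) r m := by
  intro B hB
  have hsub : {U | U ∈ fibers f ∧ (U ∩ B).Nonempty} ⊆ (fun y => f ⁻¹' {y}) '' (f '' B) := by
    rintro _ ⟨⟨x, rfl⟩, z, hz, hzB⟩
    exact ⟨f z, mem_image_of_mem f hzB, by rw [show f z = f x from hz]⟩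
  calc _ ≤ ((fun y => f ⁻¹' {y}) '' (f '' B)).encard := encard_le_encard hsub
    _ ≤ (f '' B).encard := encard_image_le _ _
    _ ≤ m := h B hB

end Fibers

section Coloring

variable {X : Type*} [PseudoMetricSpace X]

/-- Label a point by a colour and a member of that colour containing it; on a set of diameter
`≤ s` the colour determines the member, by `s`-disjointness. -/
lemma exists_label_of_rDisjoint {n : ℕ} {s D : ℝ} (hs : 0 ≤ s) (hD : 0 ≤ D)
    (𝒱 : Fin (n + 1) → Set (Set X)) (hdisj : ∀ j, RDisjoint s (𝒱 j))
    (hdiam : ∀ j, ∀ U ∈ 𝒱 j, ediam U ≤ ENNReal.ofReal D) (hcov : ⋃ j, ⋃₀ 𝒱 j = univ) :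
    ∃ q : X → Fin (n + 1) × Set X, (∀ x y, q x = q y → dist x y ≤ D) ∧
      ∀ B : Set X, ediam B ≤ ENNReal.ofReal s → (q '' B).encard ≤ (n + 1 : ℕ) := by
  have hmem : ∀ x, ∃ p : Fin (n + 1) × Set X, p.2 ∈ 𝒱 p.1 ∧ x ∈ p.2 := by
    intro x
    obtain ⟨j, U, hU, hx⟩ : ∃ j, ∃ U ∈ 𝒱 j, x ∈ U := by
      have hx : x ∈ ⋃ j, ⋃₀ 𝒱 j := hcov ▸ mem_univ x
      simpa only [mem_iUnion, mem_sUnion] using hx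
    exact ⟨(j, U), hU, hx⟩
  choose q hq using hmem
  refine ⟨q, fun x y hxy => ?_, fun B hB => ?_⟩
  · exact dist_le_of_ediam_le hD (hdiam _ _ (hq x).1) (hq x).2 (hxy ▸ (hq y).2)
  have hinj : InjOn Prod.fst (q '' B) := by
    rintro _ ⟨x, hx, rfl⟩ _ ⟨y, hy, rfl⟩ hxy
    by_contra hne
    have hU : (q x).2 ≠ (q y).2 := fun h => hne (Prod.ext hxy h)
    have hfar := hdisj _ _ (hq x).1 _ (hxy ▸ (hq y).1) hU x (hq x).2 y (hq y).2
    exact hfar.not_ge (dist_le_of_ediam_le hs hB hx hy)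
  calc (q '' B).encard ≤ (univ : Set (Fin (n + 1))).encard :=
        encard_le_encard_of_injOn (mapsTo_univ _ _) hinj
    _ = (n + 1 : ℕ) := by simp

lemma ANasdimLE.exists_labels {n : ℕ} (h : ANasdimLE X n) :
    ∃ c b : ℝ, 0 ≤ c ∧ 0 ≤ b ∧ ∀ s : ℝ, 0 ≤ s → ∃ q : X → Fin (n + 1) × Set X,
      (∀ x y, q x = q y → dist x y ≤ c * s + b) ∧
      ∀ B : Set X, ediam B ≤ ENNReal.ofReal s → (q '' B).encard ≤ (n + 1 : ℕ) := by
  obtain ⟨c, b, hc, hb, hcov⟩ := h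
  refine ⟨c, b, hc, hb, fun s hs => ?_⟩
  obtain ⟨𝒱, hdisj, hdiam, hunion⟩ := hcov s
  exact exists_label_of_rDisjoint hs (by positivity) 𝒱 hdisj hdiam hunion

end Coloring

section Coarsening

open Function

variable {X Y Z : Type*} [PseudoMetricSpace X] [Nonempty X]

-- `invFun f (f x)` depends on `f x` only, so `coarsen f q x₀ R` factors through `f`.
noncomputable def coarsen (f : X → Y) (q : X → Z) (x₀ : X) (R : ℝ) (x : X) : Z :=
  if ∃ z ∈ ball x₀ R, f z = f x then q x₀ else q (invFun f (f x))

variable {f : X → Y} {q : X → Z} {x₀ : X} {R : ℝ}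

lemma coarsen_eq_of_eq {x y : X} (h : f x = f y) :
    coarsen f q x₀ R x = coarsen f q x₀ R y := by
  simp only [coarsen, h]

lemma coarsen_eq_of_mem_ball {x : X} (hx : x ∈ ball x₀ R) : coarsen f q x₀ R x = q x₀ :=
  if_pos ⟨x, hx, rfl⟩

lemma ball_subset_fiber_coarsen (hR : 0 < R) :
    ball x₀ R ⊆ coarsen f q x₀ R ⁻¹' {coarsen f q x₀ R x₀} := fun x hx => by
  rw [mem_preimage, coarsen_eq_of_mem_ball hx, coarsen_eq_of_mem_ball (mem_ball_self hR),
    mem_singleton_iff]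

lemma exists_dist_le_of_coarsen {M : ℝ} (hR : 0 ≤ R) (hf : ∀ x y, f x = f y → dist x y ≤ M)
    (x : X) : ∃ w, q w = coarsen f q x₀ R x ∧ dist x w ≤ M + R := by
  by_cases hball : ∃ z ∈ ball x₀ R, f z = f x
  · obtain ⟨z, hz, hzx⟩ := hball
    refine ⟨x₀, (if_pos ⟨z, hz, hzx⟩).symm, ?_⟩
    calc dist x x₀ ≤ dist x z + dist z x₀ := dist_triangle x z x₀
      _ ≤ M + R := add_le_add (hf x z hzx.symm) (mem_ball.1 hz).le
  · refine ⟨invFun f (f x), (if_neg hball).symm, ?_⟩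
    have := hf x _ (invFun_eq ⟨x, rfl⟩).symm
    linarith

lemma coarsen_mesh {M m : ℝ} (hR : 0 ≤ R) (hf : ∀ x y, f x = f y → dist x y ≤ M)
    (hq : ∀ x y, q x = q y → dist x y ≤ m) (x y : X)
    (hxy : coarsen f q x₀ R x = coarsen f q x₀ R y) :
    dist x y ≤ 2 * M + 2 * R + m := by
  obtain ⟨w, hw, hxw⟩ := exists_dist_le_of_coarsen (q := q) (x₀ := x₀) hR hf x
  obtain ⟨w', hw', hyw'⟩ := exists_dist_le_of_coarsen (q := q) (x₀ := x₀) hR hf y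
  have hww' := hq w w' (by rw [hw, hw', hxy])
  calc dist x y ≤ dist x w + dist w w' + dist w' y := dist_triangle4 x w w' y
    _ ≤ 2 * M + 2 * R + m := by rw [dist_comm w' y]; linarith

lemma encard_image_coarsen_le {M r s : ℝ} {k : ℕ} (hR : 0 ≤ R) (hr : 0 ≤ r)
    (hf : ∀ x y, f x = f y → dist x y ≤ M)
    (hq : ∀ B : Set X, ediam B ≤ ENNReal.ofReal s → (q '' B).encard ≤ k)
    (hrs : r + 2 * (M + R) ≤ s) (B : Set X) (hB : ediam B ≤ ENNReal.ofReal r) :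
    (coarsen f q x₀ R '' B).encard ≤ k := by
  set B' := {w | ∃ x ∈ B, dist x w ≤ M + R}
  have hsub : coarsen f q x₀ R '' B ⊆ q '' B' := by
    rintro _ ⟨x, hx, rfl⟩
    obtain ⟨w, hw, hxw⟩ := exists_dist_le_of_coarsen hR hf x
    exact ⟨w, ⟨x, hx, hxw⟩, hw⟩
  have hB' : ediam B' ≤ ENNReal.ofReal s := by
    refine ediam_le_of_forall_dist_le ?_
    rintro w ⟨x, hx, hxw⟩ w' ⟨x', hx', hxw'⟩
    have := dist_le_of_ediam_le hr hB hx hx'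
    calc dist w w' ≤ dist w x + dist x x' + dist x' w' := dist_triangle4 w x x' w'
      _ ≤ s := by rw [dist_comm w x]; linarith
  exact (encard_le_encard hsub).trans (hq B' hB')

noncomputable def coarsenSeq (q : ℕ → X → Y) (x₀ : X) (t : ℝ) : ℕ → X → Y
  | 0 => q 0
  | i + 1 => coarsen (coarsenSeq q x₀ t i) (q (i + 1)) x₀ (t ^ i)

variable {q : ℕ → X → Y} {t : ℝ}

lemma coarsenSeq_refines (j : ℕ) {x y : X}
    (h : coarsenSeq q x₀ t (j - 1) x = coarsenSeq q x₀ t (j - 1) y) :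
    coarsenSeq q x₀ t j x = coarsenSeq q x₀ t j y := by
  cases j with
  | zero => exact h
  | succ i => exact coarsen_eq_of_eq h

lemma coarsenSeq_mesh {c b A : ℝ} (ht : 1 ≤ t) (hb : 0 ≤ b) (hA₀ : c + b ≤ A)
    (hA : 2 * A + 2 + c * t + b ≤ A * t)
    (hq : ∀ i x y, q i x = q i y → dist x y ≤ c * t ^ i + b) :
    ∀ i x y, coarsenSeq q x₀ t i x = coarsenSeq q x₀ t i y → dist x y ≤ A * t ^ i
  | 0, x, y, h => by simpa using (hq 0 x y h).trans (by simpa using hA₀)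
  | i + 1, x, y, h => by
    have hp : 1 ≤ t ^ i := one_le_pow₀ ht
    have hxy := coarsen_mesh (pow_nonneg (zero_le_one.trans ht) i)
      (coarsenSeq_mesh ht hb hA₀ hA hq i) (hq (i + 1)) x y h
    rw [pow_succ] at hxy ⊢
    nlinarith [mul_le_mul_of_nonneg_right hA (zero_le_one.trans hp),
      mul_le_mul_of_nonneg_left hp hb]

lemma coarsenSeq_multLE {n : ℕ} {A : ℝ} (ht : 0 < t) (htA : 2 * A + 3 ≤ t)
    (hmesh : ∀ i x y, coarsenSeq q x₀ t i x = coarsenSeq q x₀ t i y → dist x y ≤ A * t ^ i)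
    (hq : ∀ i, ∀ B : Set X, ediam B ≤ ENNReal.ofReal (t ^ i) → (q i '' B).encard ≤ (n + 1 : ℕ))
    {i : ℕ} {r : ℝ} (hr : 0 ≤ r) (hri : r ≤ t ^ i) :
    MultLE (fibers (coarsenSeq q x₀ t (i + 1))) r (n + 1) := by
  refine multLE_fibers (encard_image_coarsen_le (pow_nonneg ht.le i) hr (hmesh i) (hq (i + 1)) ?_)
  rw [pow_succ]
  nlinarith [mul_le_mul_of_nonneg_left htA (pow_nonneg ht.le i)]

end Coarsening

section Precode

variable {X Y : Type*} [PseudoMetricSpace X]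

def IsANasdimPrecode (m : ℕ) (𝒰 : ℕ → Set (Set X)) : Prop :=
  (∀ i, IsCover (𝒰 i)) ∧ (∀ i, UniformlyBounded (𝒰 i)) ∧
    (∀ i, ∀ U ∈ 𝒰 i, ∃! V, V ∈ 𝒰 (i + 1) ∧ U ⊆ V) ∧
    (∀ D : Set X, Bornology.IsBounded D → ∃ i, ∃ U ∈ 𝒰 i, D ⊆ U) ∧
    ∃ (a : ℝ) (i₀ : ℕ), 1 < a ∧ (∀ i, i₀ ≤ i → MeshLE (𝒰 i) (a ^ i)) ∧
      ∃ c r₀ : ℝ, 0 < c ∧ 0 < r₀ ∧ ∀ r : ℝ, r₀ ≤ r →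
        ∃ i : ℕ, a ^ i ≤ c * r ∧ MultLE (𝒰 i) r m

lemma isANasdimPrecode_of_isEmpty [IsEmpty X] (m : ℕ) :
    IsANasdimPrecode m fun _ => ({∅} : Set (Set X)) := by
  have hempty : ∀ S : Set X, S = ∅ := fun S => eq_empty_of_isEmpty S
  have hmesh : ∀ M : ℝ, MeshLE ({∅} : Set (Set X)) M := by
    rintro M _ rfl
    exact (ediam_empty (X := X)).trans_le bot_le
  refine ⟨fun _ => eq_univ_of_forall isEmptyElim, fun _ => ⟨0, hmesh 0⟩,
    fun _ U _ => ⟨∅, by simp [hempty U]⟩, fun D _ => ⟨0, ∅, rfl, (hempty D).le⟩,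
    2, 0, one_lt_two, fun i _ => hmesh _, 1, 1, one_pos, one_pos, fun r hr => ⟨0, by simpa, ?_⟩⟩
  intro B _
  simp [hempty B]

lemma isANasdimPrecode_fibers_coarsenSeq [Nonempty X] {n : ℕ} {c b t : ℝ} (hc : 0 ≤ c)
    (hb : 0 ≤ b) (ht : 7 + 4 * (c + b) ≤ t) (x₀ : X) (q : ℕ → X → Y)
    (hq_mesh : ∀ i x y, q i x = q i y → dist x y ≤ c * t ^ i + b)
    (hq_mult : ∀ i, ∀ B : Set X, ediam B ≤ ENNReal.ofReal (t ^ i) →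
      (q i '' B).encard ≤ (n + 1 : ℕ)) :
    IsANasdimPrecode (n + 1) fun j => fibers (coarsenSeq q x₀ t (j - 1)) := by
  have ht₁ : 1 < t := by linarith
  have ht₀ : 0 < t := by linarith
  set A := 2 + 2 * (c + b)
  have hmesh := coarsenSeq_mesh (x₀ := x₀) (A := A) ht₁.le hb (by linarith) (by nlinarith) hq_mesh
  -- The index shift (`𝒰₀ = 𝒰₁`, as `0 - 1 = 0`) turns the mesh bound `A tᵏ` of the `k`-th
  -- labels, `A ≤ t`, into `mesh 𝒰ₖ₊₁ ≤ tᵏ⁺¹`.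
  refine ⟨fun j => isCover_fibers _, fun j => ⟨_, meshLE_fibers (hmesh (j - 1))⟩,
    fun j U hU => existsUnique_fibers_superset (fun _ _ => coarsenSeq_refines j) hU, ?_,
    t, 1, ht₁, ?_, t ^ 3, 1, by positivity, one_pos, ?_⟩
  · intro D hD
    obtain ⟨ρ, hρ⟩ := hD.subset_closedBall x₀
    obtain ⟨i, hi⟩ := pow_unbounded_of_one_lt ρ ht₁
    exact ⟨i + 2, _, mem_range_self x₀, hρ.trans ((closedBall_subset_ball hi).trans
      (ball_subset_fiber_coarsen (pow_pos ht₀ i)))⟩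
  · intro j hj
    obtain ⟨k, rfl⟩ := Nat.exists_eq_add_of_le' hj
    refine meshLE_fibers fun x y h => (hmesh k x y h).trans ?_
    rw [pow_succ']
    exact mul_le_mul_of_nonneg_right (by linarith) (pow_nonneg ht₀.le k)
  · intro r hr
    obtain ⟨k, hkr, hrk⟩ := exists_nat_pow_near hr ht₁
    refine ⟨k + 3, ?_, coarsenSeq_multLE ht₀ (by linarith) hmesh hq_mult (by linarith) hrk.le⟩
    calc t ^ (k + 3) = t ^ 3 * t ^ k := by ring
      _ ≤ t ^ 3 * r := by gcongr

end Precode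

/-- if `ANasdim X ≤ n` then `X` admits an `(n+1)`-precode structure for
asymptotic Assouad-Nagata dimension. -/
theorem statement17 {X : Type*} [MetricSpace X] (n : ℕ) (h : ANasdimLE X n) :
    ∃ 𝒰 : ℕ → Set (Set X),
      (∀ i, IsCover (𝒰 i)) ∧ (∀ i, UniformlyBounded (𝒰 i)) ∧
      (∀ i, ∀ U ∈ 𝒰 i, ∃! V, V ∈ 𝒰 (i + 1) ∧ U ⊆ V) ∧
      (∀ D : Set X, Bornology.IsBounded D → ∃ i, ∃ U ∈ 𝒰 i, D ⊆ U) ∧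
      ∃ (a : ℝ) (i₀ : ℕ), 1 < a ∧ (∀ i, i₀ ≤ i → MeshLE (𝒰 i) (a ^ i)) ∧
        ∃ c r₀ : ℝ, 0 < c ∧ 0 < r₀ ∧ ∀ r : ℝ, r₀ ≤ r →
          ∃ i : ℕ, a ^ i ≤ c * r ∧ MultLE (𝒰 i) r (n + 1) := by
  rcases isEmpty_or_nonempty X with hX | hX
  · exact ⟨_, isANasdimPrecode_of_isEmpty (n + 1)⟩
  obtain ⟨c, b, hc, hb, hlabel⟩ := h.exists_labels
  set t := 7 + 4 * (c + b)
  choose q hq_mesh hq_mult using fun i : ℕ => hlabel (t ^ i) (by positivity)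
  exact ⟨_, isANasdimPrecode_fibers_coarsenSeq hc hb le_rfl hX.some q hq_mesh hq_mult⟩
end

section
/- For every metric space (X, d): ANasdim(X, d) ≤ 0 if and only if there exists an ultrametric ρ on X such that the identity map id: (X, d) → (X, ρ) is a quasi-isometric map. -/
open Metric Set
open scoped Classical

/-!
If `ANasdim X ≤ 0` with constants `c, b`, take `rₖ`-disjoint covers `𝒰ₖ` at the geometric scales
`rₖ = (b + 1) (c + 2) ^ k`. Since `mesh 𝒰ₖ ≤ c rₖ + b ≤ rₖ₊₁`, lying in a common member of `𝒰ₖ` is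
an increasing, exhausting sequence of equivalence relations, and `ρ(x, y) = rₖ` for the least such
`k` is an ultrametric within a factor `c + 2` of `d`, up to an additive constant. Conversely, the
closed `r`-balls of an ultrametric space form an `r`-disjoint cover of mesh `r`, and preimages of
such covers under a quasi-isometric embedding witness `ANasdim ≤ 0`.
-/

section Covers

variable {X : Type*}

def SameMember (𝒰 : Set (Set X)) (x y : X) : Prop :=
  ∃ U ∈ 𝒰, x ∈ U ∧ y ∈ U

variable [PseudoMetricSpace X] {𝒰 : Set (Set X)} {r : ℝ}

lemma RDisjoint.eq_of_mem_of_mem (h : RDisjoint r 𝒰) (hr : 0 ≤ r) {U V : Set X} (hU : U ∈ 𝒰)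
    (hV : V ∈ 𝒰) {x : X} (hxU : x ∈ U) (hxV : x ∈ V) : U = V := by
  by_contra hUV
  have := h U hU V hV hUV x hxU x hxV
  rw [dist_self] at this
  linarith

lemma RDisjoint.sameMember_of_dist_le (h : RDisjoint r 𝒰) (hcov : IsCover 𝒰) {x y : X}
    (hxy : dist x y ≤ r) : SameMember 𝒰 x y := by
  obtain ⟨U, hU, hxU⟩ := mem_sUnion.mp (hcov ▸ mem_univ x : x ∈ ⋃₀ 𝒰)
  obtain ⟨V, hV, hyV⟩ := mem_sUnion.mp (hcov ▸ mem_univ y : y ∈ ⋃₀ 𝒰)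
  by_cases hUV : U = V
  · exact ⟨U, hU, hxU, hUV ▸ hyV⟩
  · exact absurd (h U hU V hV hUV x hxU y hyV) hxy.not_gt

lemma RDisjoint.equivalence_sameMember (h : RDisjoint r 𝒰) (hr : 0 ≤ r) (hcov : IsCover 𝒰) :
    Equivalence (SameMember 𝒰) where
  refl x := h.sameMember_of_dist_le hcov ((dist_self x).trans_le hr)
  symm := fun ⟨U, hU, hx, hy⟩ => ⟨U, hU, hy, hx⟩
  trans := fun ⟨U, hU, hx, hy⟩ ⟨_, hV, hy', hz⟩ =>
    ⟨U, hU, hx, h.eq_of_mem_of_mem hr hU hV hy hy' ▸ hz⟩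

lemma MeshLE.dist_le_of_sameMember {M : ℝ} (h : MeshLE 𝒰 M) (hM : 0 ≤ M) {x y : X}
    (hxy : SameMember 𝒰 x y) : dist x y ≤ M := by
  obtain ⟨U, hU, hx, hy⟩ := hxy
  exact (edist_le_ofReal hM).mp ((Metric.edist_le_ediam_of_mem hx hy).trans (h U hU))

end Covers

lemma anasdimLE_zero_iff {X : Type*} [MetricSpace X] :
    ANasdimLE X 0 ↔ ∃ c b : ℝ, 0 ≤ c ∧ 0 ≤ b ∧ ∀ r : ℝ, 0 ≤ r →
      ∃ 𝒰 : Set (Set X), RDisjoint r 𝒰 ∧ MeshLE 𝒰 (c * r + b) ∧ IsCover 𝒰 := by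
  constructor
  · rintro ⟨c, b, hc, hb, h⟩
    refine ⟨c, b, hc, hb, fun r _ => ?_⟩
    obtain ⟨𝒰, hdisj, hmesh, hcov⟩ := h r
    exact ⟨𝒰 0, hdisj 0, hmesh 0, (iSup_unique (ι := Fin 1) _).symm.trans hcov⟩
  · rintro ⟨c, b, hc, hb, h⟩
    refine ⟨c, b, hc, hb, fun r => ?_⟩
    suffices ∃ 𝒰 : Set (Set X), RDisjoint r 𝒰 ∧ MeshLE 𝒰 (c * r + b) ∧ IsCover 𝒰 by
      obtain ⟨𝒰, hdisj, hmesh, hcov⟩ := this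
      exact ⟨fun _ => 𝒰, fun _ => hdisj, fun _ => hmesh, by rwa [iUnion_const]⟩
    rcases le_or_gt 0 r with hr | hr
    · exact h r hr
    refine ⟨range singleton, ?_, ?_, ?_⟩
    · rintro _ ⟨x, rfl⟩ _ ⟨y, rfl⟩ hne _ rfl _ rfl
      exact hr.trans (dist_pos.mpr fun hxy => hne (hxy ▸ rfl))
    · rintro _ ⟨x, rfl⟩
      exact Metric.ediam_singleton.trans_le zero_le
    · exact (sUnion_range singleton).trans (iUnion_of_singleton X)

lemma isCover_range_closedBall {Y : Type*} [PseudoMetricSpace Y] {r : ℝ} (hr : 0 ≤ r) :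
    IsCover (range (closedBall · r : Y → Set Y)) :=
  eq_univ_of_forall fun x => mem_sUnion_of_mem (mem_closedBall_self hr) (mem_range_self x)

namespace IsUltrametricDist

variable {Y : Type*} [PseudoMetricSpace Y] [IsUltrametricDist Y]

lemma rDisjoint_range_closedBall (r : ℝ) : RDisjoint r (range (closedBall · r : Y → Set Y)) := by
  rintro _ ⟨x, rfl⟩ _ ⟨y, rfl⟩ hne p hp q hq
  dsimp only at hp hq hne ⊢
  by_contra! hpq
  apply hne
  rw [closedBall_eq_of_mem hp, closedBall_eq_of_mem hq,
    closedBall_eq_of_mem (mem_closedBall.mpr (dist_comm q p ▸ hpq))]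

lemma meshLE_range_closedBall {r : ℝ} (hr : 0 ≤ r) :
    MeshLE (range (closedBall · r : Y → Set Y)) r := by
  rintro _ ⟨x, rfl⟩
  refine Metric.ediam_le fun p hp q hq => (edist_le_ofReal hr).mpr ?_
  exact (dist_triangle_max p x q).trans
    (max_le (mem_closedBall.mp hp) (dist_comm x q ▸ mem_closedBall.mp hq))

end IsUltrametricDist

lemma IsUltrametricDist.anasdimLE_zero (Y : Type*) [MetricSpace Y] [IsUltrametricDist Y] :
    ANasdimLE Y 0 :=
  anasdimLE_zero_iff.mpr ⟨1, 0, zero_le_one, le_rfl, fun r hr =>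
    ⟨_, rDisjoint_range_closedBall r, by simpa using meshLE_range_closedBall hr,
      isCover_range_closedBall hr⟩⟩

lemma anasdimLE_zero_of_quasiIsometricEmbedding {X Y : Type*} [MetricSpace X] [MetricSpace Y]
    (hY : ANasdimLE Y 0) {f : X → Y} {c b : ℝ} (hc : 0 < c) (hb : 0 ≤ b)
    (hf : ∀ x x', (1 / c) * dist x x' - b ≤ dist (f x) (f x') ∧
      dist (f x) (f x') ≤ c * dist x x' + b) :
    ANasdimLE X 0 := by
  obtain ⟨cY, bY, hcY, hbY, hcovY⟩ := anasdimLE_zero_iff.mp hY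
  have hdist : ∀ x x', dist x x' ≤ c * (dist (f x) (f x') + b) := fun x x' => by
    have := (hf x x').1
    rw [div_mul_eq_mul_div, one_mul, sub_le_iff_le_add, div_le_iff₀ hc] at this
    linarith
  refine anasdimLE_zero_iff.mpr ⟨c * cY * c, c * (cY * b + bY + b), by positivity, by positivity,
    fun r hr => ?_⟩
  obtain ⟨𝒱, hdisj, hmesh, hcov⟩ := hcovY (c * r + b) (by positivity)
  refine ⟨preimage f '' 𝒱, ?_, ?_, ?_⟩
  · rintro _ ⟨V, hV, rfl⟩ _ ⟨V', hV', rfl⟩ hne x hx x' hx'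
    have := (hdisj V hV V' hV' (fun h => hne (h ▸ rfl)) _ hx _ hx').trans_le (hf x x').2
    nlinarith
  · rintro _ ⟨V, hV, rfl⟩
    refine Metric.ediam_le fun x hx x' hx' => (edist_le_ofReal (by positivity)).mpr ?_
    have := hmesh.dist_le_of_sameMember (by positivity) ⟨V, hV, hx, hx'⟩
    calc dist x x' ≤ c * (dist (f x) (f x') + b) := hdist x x'
      _ ≤ c * (cY * (c * r + b) + bY + b) := by gcongr
      _ = c * cY * c * r + c * (cY * b + bY + b) := by ring
  · rw [_root_.IsCover, sUnion_image, ← preimage_sUnion, hcov, preimage_univ]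

section LevelDist

variable {X : Type*} {E : ℕ → X → X → Prop} {s : ℕ → ℝ}

noncomputable def levelDist (E : ℕ → X → X → Prop) (s : ℕ → ℝ) (x y : X) : ℝ :=
  if x = y then 0 else s (sInf {k | E k x y})

lemma levelDist_self (x : X) : levelDist E s x x = 0 := if_pos rfl

lemma levelDist_comm (hE : ∀ k, Equivalence (E k)) (x y : X) :
    levelDist E s x y = levelDist E s y x := by
  have hset : {k | E k x y} = {k | E k y x} := Set.ext fun k => ⟨(hE k).symm, (hE k).symm⟩
  simp only [levelDist, eq_comm (a := x), hset]

lemma levelDist_le (hs : Monotone s) (hs0 : ∀ k, 0 ≤ s k) {k : ℕ} {x y : X} (hk : E k x y) :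
    levelDist E s x y ≤ s k := by
  unfold levelDist
  split_ifs
  exacts [hs0 k, hs (Nat.sInf_le hk)]

lemma exists_levelDist_eq (hexh : ∀ x y, ∃ k, E k x y) {x y : X} (hxy : x ≠ y) :
    ∃ k, E k x y ∧ levelDist E s x y = s k :=
  ⟨_, Nat.sInf_mem (hexh x y), if_neg hxy⟩

lemma levelDist_nonneg (hs0 : ∀ k, 0 ≤ s k) (x y : X) : 0 ≤ levelDist E s x y := by
  unfold levelDist
  split_ifs
  exacts [le_rfl, hs0 _]

lemma levelDist_le_max (hE : ∀ k, Equivalence (E k)) (hmono : Monotone E)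
    (hexh : ∀ x y, ∃ k, E k x y) (hs : Monotone s) (hs0 : ∀ k, 0 ≤ s k) (x y z : X) :
    levelDist E s x z ≤ max (levelDist E s x y) (levelDist E s y z) := by
  rcases eq_or_ne x y with rfl | hxy
  · exact le_max_right _ _
  rcases eq_or_ne y z with rfl | hyz
  · exact le_max_left _ _
  obtain ⟨i, hi, hxy⟩ := exists_levelDist_eq (s := s) hexh hxy
  obtain ⟨j, hj, hyz⟩ := exists_levelDist_eq (s := s) hexh hyz
  have hxz : E (max i j) x z :=
    (hE _).trans (hmono (le_max_left i j) x y hi) (hmono (le_max_right i j) y z hj)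
  rw [hxy, hyz, ← hs.map_max]
  exact levelDist_le hs hs0 hxz

lemma dist_le_mul_levelDist_add {X : Type*} [PseudoMetricSpace X] {E : ℕ → X → X → Prop}
    {s : ℕ → ℝ} {c b : ℝ} (hexh : ∀ x y, ∃ k, E k x y) (hb : 0 ≤ b)
    (hdist : ∀ k {x y}, E k x y → dist x y ≤ c * s k + b) (x y : X) :
    dist x y ≤ c * levelDist E s x y + b := by
  rcases eq_or_ne x y with rfl | hxy
  · simpa [levelDist_self] using hb
  obtain ⟨k, hk, heq⟩ := exists_levelDist_eq (s := s) hexh hxy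
  exact heq ▸ hdist k hk

@[reducible]
noncomputable def levelMetric (hE : ∀ k, Equivalence (E k)) (hmono : Monotone E)
    (hexh : ∀ x y, ∃ k, E k x y) (hs : Monotone s) (hs0 : ∀ k, 0 < s k) : MetricSpace X where
  dist := levelDist E s
  dist_self := levelDist_self
  dist_comm := levelDist_comm hE
  dist_triangle x y z := (levelDist_le_max hE hmono hexh hs (fun k => (hs0 k).le) x y z).trans
    (max_le_add_of_nonneg (levelDist_nonneg (fun k => (hs0 k).le) x y)
      (levelDist_nonneg (fun k => (hs0 k).le) y z))
  eq_of_dist_eq_zero {x y} h := by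
    by_contra hxy
    obtain ⟨k, -, hk⟩ := exists_levelDist_eq (s := s) hexh hxy
    exact (hs0 k).ne' (hk ▸ h)

end LevelDist

lemma exists_le_mul_pow_le {a q t : ℝ} (ha : 0 < a) (hq : 1 < q) (ht : 0 ≤ t) :
    ∃ k : ℕ, t ≤ a * q ^ k ∧ a * q ^ k ≤ q * t + a := by
  rcases le_or_gt t a with hta | hat
  · exact ⟨0, by simpa using hta, by nlinarith⟩
  obtain ⟨n, hn, hn'⟩ := exists_nat_pow_near ((one_le_div ha).mpr hat.le) hq
  rw [le_div_iff₀ ha] at hn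
  rw [div_lt_iff₀ ha] at hn'
  refine ⟨n + 1, by linarith, ?_⟩
  rw [pow_succ]
  nlinarith

theorem exists_ultrametric_quasiIsometric_of_covers {X : Type*} [m : MetricSpace X] {c b : ℝ}
    (hc : 0 ≤ c) (hb : 0 ≤ b)
    (h : ∀ r : ℝ, 0 ≤ r → ∃ 𝒰 : Set (Set X), RDisjoint r 𝒰 ∧ MeshLE 𝒰 (c * r + b) ∧ IsCover 𝒰) :
    ∃ m' : MetricSpace X, IsUltrametric (distOf m') ∧
      @QuasiIsometric X X m.toPseudoMetricSpace m'.toPseudoMetricSpace id := by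
  set q := c + 2 with hq
  set s : ℕ → ℝ := fun k => (b + 1) * q ^ k with hs_def
  have hs0 : ∀ k, 0 < s k := fun k => by positivity
  have hs : Monotone s := fun i j hij => by
    simp only [hs_def]
    gcongr
    linarith
  choose 𝒰 hdisj hmesh hcov using fun k => h (s k) (hs0 k).le
  set E := fun k => SameMember (𝒰 k)
  have hE : ∀ k, Equivalence (E k) := fun k =>
    (hdisj k).equivalence_sameMember (hs0 k).le (hcov k)
  have hE_of_dist : ∀ k {x y}, dist x y ≤ s k → E k x y := fun k =>
    (hdisj k).sameMember_of_dist_le (hcov k)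
  have hdist_of_E : ∀ k {x y}, E k x y → dist x y ≤ c * s k + b := fun k =>
    (hmesh k).dist_le_of_sameMember (by nlinarith [hs0 k])
  have hmono : Monotone E := monotone_nat_of_le_succ fun k x y hxy =>
    hE_of_dist (k + 1) <| (hdist_of_E k hxy).trans <| by
      have hsucc : s (k + 1) = q * s k := by simp only [hs_def]; ring
      have hsk : b + 1 ≤ s k := le_mul_of_one_le_right (by linarith) (one_le_pow₀ (by linarith))
      rw [hsucc, hq]
      nlinarith
  have hexh : ∀ x y, ∃ k, E k x y := fun x y => by
    obtain ⟨k, hk, -⟩ := exists_le_mul_pow_le (a := b + 1) (q := q) (by linarith) (by linarith)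
      (dist_nonneg (x := x) (y := y))
    exact ⟨k, hE_of_dist k hk⟩
  refine ⟨levelMetric hE hmono hexh hs hs0, levelDist_le_max hE hmono hexh hs (fun k => (hs0 k).le),
    ⟨q, b + 1, by positivity, by positivity, fun x y => ⟨?_, ?_⟩⟩, 1, one_pos, fun y => ⟨y, ?_⟩⟩
  · show (1 / q) * dist x y - (b + 1) ≤ levelDist E s x y
    have := dist_le_mul_levelDist_add hexh hb hdist_of_E x y
    have := levelDist_nonneg (E := E) (fun k => (hs0 k).le) x y
    rw [sub_le_iff_le_add, one_div_mul_eq_div, div_le_iff₀ (by positivity)]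
    nlinarith
  · show levelDist E s x y ≤ q * dist x y + (b + 1)
    obtain ⟨k, hk, hk'⟩ := exists_le_mul_pow_le (a := b + 1) (q := q) (by linarith) (by linarith)
      (dist_nonneg (x := x) (y := y))
    exact (levelDist_le hs (fun k => (hs0 k).le) (hE_of_dist k hk)).trans hk'
  · show levelDist E s y y ≤ 1
    rw [levelDist_self]
    exact zero_le_one

/-- `ANasdim (X, d) ≤ 0` iff there is an ultrametric `ρ` on `X` such that
`id : (X, d) → (X, ρ)` is a quasi-isometric map. -/
theorem statement19 {X : Type*} [m : MetricSpace X] :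
    ANasdimLE X 0 ↔
      ∃ m' : MetricSpace X, IsUltrametric (distOf m') ∧
        @QuasiIsometric X X m.toPseudoMetricSpace m'.toPseudoMetricSpace id := by
  constructor
  · intro h
    obtain ⟨c, b, hc, hb, hcov⟩ := anasdimLE_zero_iff.mp h
    exact exists_ultrametric_quasiIsometric_of_covers hc hb hcov
  · rintro ⟨m', hu, ⟨c, b, hc, hb, hf⟩, -⟩
    have : @IsUltrametricDist X m'.toDist := ⟨hu⟩
    exact @anasdimLE_zero_of_quasiIsometricEmbedding X X m m'
      (@IsUltrametricDist.anasdimLE_zero X m' this) id c b hc hb.le hf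
end
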